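/- arXiv:1507.03364 — 5 statements merged into one kernel-verified Lean document; each statement's English description precedes it below -/
import Mathlib

section
/- Let X_n ⊆ X and Y_m ⊆ Y be increasing sequences of finite-dimensional subspaces whose unions are dense in X and Y respectively. Then for every x ∈ N(A)^⊥, the distance from x to N(A_{n,m})^⊥ = R(A_{n,m}*) tends to 0 as n, m → ∞. -/
open ContinuousLinearMap Filter Topology

noncomputable section

/-- Orthogonal projection onto a subspace, as an endomorphism. -/
noncomputable def proj {E : Type*} [NormedAddCommGroup E] [InnerProductSpace ℝ E]
    (K : Submodule ℝ E) [Submodule.HasOrthogonalProjection K] : E →L[ℝ] E :=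
  K.subtypeL.comp (Submodule.orthogonalProjectionOnto K : E →L[ℝ] K)

/-- The discretized operator `A_{n,m} = Q_m A P_n`. -/
noncomputable def Amn {X Y : Type*} [NormedAddCommGroup X] [InnerProductSpace ℝ X]
    [NormedAddCommGroup Y] [InnerProductSpace ℝ Y]
    (A : X →L[ℝ] Y) (Xn : Submodule ℝ X) (Ym : Submodule ℝ Y)
    [Submodule.HasOrthogonalProjection Xn] [Submodule.HasOrthogonalProjection Ym] : X →L[ℝ] Y :=
  (proj Ym).comp (A.comp (proj Xn))

/-- `B` is the Moore–Penrose pseudoinverse of `A` (the four Penrose conditions). -/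
def IsPseudoinverse {X Y : Type*} [NormedAddCommGroup X] [InnerProductSpace ℝ X]
    [CompleteSpace X] [NormedAddCommGroup Y] [InnerProductSpace ℝ Y] [CompleteSpace Y]
    (A : X →L[ℝ] Y) (B : Y →L[ℝ] X) : Prop :=
  A.comp (B.comp A) = A ∧ B.comp (A.comp B) = B ∧
  ContinuousLinearMap.adjoint (A.comp B) = A.comp B ∧
  ContinuousLinearMap.adjoint (B.comp A) = B.comp A

/-- The projection `proj` is self-adjoint. -/
lemma proj_adjoint {E : Type*} [NormedAddCommGroup E] [InnerProductSpace ℝ E] [CompleteSpace E]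
    (K : Submodule ℝ E) [Submodule.HasOrthogonalProjection K] [CompleteSpace K] :
    ContinuousLinearMap.adjoint (proj K) = proj K :=
  (isSelfAdjoint_starProjection K).adjoint_eq

/-- `proj` is a norm-nonincreasing map. -/
lemma proj_norm_le {E : Type*} [NormedAddCommGroup E] [InnerProductSpace ℝ E]
    (K : Submodule ℝ E) [Submodule.HasOrthogonalProjection K] (v : E) : ‖_root_.proj K v‖ ≤ ‖v‖ := by
  have h1 : ‖Submodule.orthogonalProjectionOnto K v‖ ≤ ‖v‖ := by
    calc ‖Submodule.orthogonalProjectionOnto K v‖ ≤ ‖(Submodule.orthogonalProjectionOnto K : E →L[ℝ] K)‖ * ‖v‖ :=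
          (Submodule.orthogonalProjectionOnto K : E →L[ℝ] K).le_opNorm v
      _ ≤ 1 * ‖v‖ := mul_le_mul_of_nonneg_right (Submodule.orthogonalProjectionOnto_norm_le K) (norm_nonneg v)
      _ = ‖v‖ := one_mul _
  simpa [_root_.proj] using h1

/-- `proj K z` is the nearest point: `‖z - proj K z‖ ≤ ‖z - z'‖` for `z' ∈ K`. -/
lemma proj_dist_le {E : Type*} [NormedAddCommGroup E] [InnerProductSpace ℝ E]
    (K : Submodule ℝ E) [Submodule.HasOrthogonalProjection K] (z : E) {z' : E} (hz' : z' ∈ K) :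
    ‖z - proj K z‖ ≤ ‖z - z'‖ := by
  have : ‖z - proj K z‖ = ⨅ x : K, ‖z - x‖ := Submodule.starProjection_minimal (U := K) z
  rw [this]
  exact ciInf_le ⟨0, fun r ⟨x, hx⟩ => hx ▸ norm_nonneg _⟩ (⟨z', hz'⟩ : K)

/-- Strong convergence of projections along an increasing dense family. -/
lemma proj_strong_conv {E : Type*} [NormedAddCommGroup E] [InnerProductSpace ℝ E]
    (Kn : ℕ → Submodule ℝ E) [∀ n, Submodule.HasOrthogonalProjection (Kn n)]
    (hK : Monotone Kn) (hd : Dense (↑(⨆ n, Kn n) : Set E)) (z : E) {ε : ℝ} (hε : 0 < ε) :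
    ∃ N, ∀ n ≥ N, ‖z - proj (Kn n) z‖ < ε := by
  have hz : z ∈ closure (↑(⨆ n, Kn n) : Set E) := hd z
  rw [Metric.mem_closure_iff] at hz
  obtain ⟨z', hz', hdz⟩ := hz ε hε
  obtain ⟨N, hN⟩ := (Submodule.mem_iSup_of_directed Kn hK.directed_le).mp hz'
  refine ⟨N, fun n hn => lt_of_le_of_lt (proj_dist_le (Kn n) z (hK hn hN)) ?_⟩
  rwa [← dist_eq_norm]

/-- `(ker A)ᗮ` is the closure of the range of the adjoint. -/
lemma ker_orth_eq {X Y : Type*} [NormedAddCommGroup X] [InnerProductSpace ℝ X] [CompleteSpace X]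
    [NormedAddCommGroup Y] [InnerProductSpace ℝ Y] [CompleteSpace Y] (A : X →L[ℝ] Y) :
    (LinearMap.ker (A : X →ₗ[ℝ] Y))ᗮ = (LinearMap.range ((ContinuousLinearMap.adjoint A : Y →ₗ[ℝ] X))).topologicalClosure := by
  have h : LinearMap.ker (A : X →ₗ[ℝ] Y) = (LinearMap.range ((ContinuousLinearMap.adjoint A : Y →ₗ[ℝ] X)))ᗮ := by
    ext v
    simp only [LinearMap.mem_ker, Submodule.mem_orthogonal, ContinuousLinearMap.coe_coe]
    constructor
    · rintro hv u ⟨y, rfl⟩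
      rw [ContinuousLinearMap.coe_coe, ContinuousLinearMap.adjoint_inner_left, hv, inner_zero_right]
    · intro hv
      have := hv (ContinuousLinearMap.adjoint A (A v)) ⟨A v, rfl⟩
      rw [ContinuousLinearMap.adjoint_inner_left, inner_self_eq_zero] at this
      exact this
  rw [h, Submodule.orthogonal_orthogonal_eq_closure]

/-- Arithmetic helper. -/
lemma aux_arith (a ε : ℝ) (ha : 0 ≤ a) (hε : 0 < ε) : a * (ε / (3 * (a + 1))) ≤ ε / 3 := by
  rw [mul_comm, div_mul_eq_mul_div, div_le_div_iff₀ (by positivity) (by norm_num)]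
  nlinarith

set_option maxHeartbeats 1000000 in
/-- for `x ∈ N(A)ᗮ`, `dist(x, N(A_{n,m})ᗮ) = dist(x, R(A_{n,m}*)) → 0`
as `n, m → ∞`. -/
theorem stmt_3 {X Y : Type*} [NormedAddCommGroup X] [InnerProductSpace ℝ X] [CompleteSpace X]
    [NormedAddCommGroup Y] [InnerProductSpace ℝ Y] [CompleteSpace Y]
    (A : X →L[ℝ] Y) (Xn : ℕ → Submodule ℝ X) (Ym : ℕ → Submodule ℝ Y)
    [∀ n, FiniteDimensional ℝ (Xn n)] [∀ m, FiniteDimensional ℝ (Ym m)]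
    (hX : Monotone Xn) (hY : Monotone Ym)
    (hdX : Dense (↑(⨆ n, Xn n) : Set X)) (hdY : Dense (↑(⨆ m, Ym m) : Set Y)) :
    ∀ x ∈ (LinearMap.ker (A : X →ₗ[ℝ] Y))ᗮ,
      Tendsto (fun p : ℕ × ℕ =>
          Metric.infDist x
            (↑(LinearMap.range ((ContinuousLinearMap.adjoint (Amn A (Xn p.1) (Ym p.2)) : Y →ₗ[ℝ] X))) : Set X))
        atTop (nhds 0) := by
  intro x hx
  set A' := ContinuousLinearMap.adjoint A with hA'
  rw [Metric.tendsto_atTop]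
  intro ε hε
  -- approximate x by an element of the range of A'
  have hx' : x ∈ closure (↑(LinearMap.range (A' : Y →ₗ[ℝ] X)) : Set X) := by
    rw [ker_orth_eq A] at hx
    rwa [← Submodule.topologicalClosure_coe]
  rw [Metric.mem_closure_iff] at hx'
  obtain ⟨w, ⟨y, rfl⟩, hw⟩ := hx' (ε / 3) (by linarith)
  -- choose M for the Y-side projections
  have hδ : (0:ℝ) < ε / (3 * (‖A'‖ + 1)) := by
    apply div_pos hε
    positivity
  obtain ⟨M, hM⟩ := proj_strong_conv Ym hY hdY y hδ
  -- choose N for the X-side projections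
  obtain ⟨N, hN⟩ := proj_strong_conv Xn hX hdX (A' y) (show (0:ℝ) < ε / 3 by linarith)
  refine ⟨(N, M), fun p hp => ?_⟩
  have hp1 : N ≤ p.1 := hp.1
  have hp2 : M ≤ p.2 := hp.2
  -- the candidate element of the range
  set B := Amn A (Xn p.1) (Ym p.2) with hB
  have hadj : ContinuousLinearMap.adjoint B =
      (proj (Xn p.1)).comp (A'.comp (proj (Ym p.2))) := by
    rw [hB, Amn, ContinuousLinearMap.adjoint_comp, ContinuousLinearMap.adjoint_comp,
      proj_adjoint, proj_adjoint, hA']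
    rfl
  set v : X := proj (Xn p.1) (A' (proj (Ym p.2) y)) with hv
  have hvmem : v ∈ (↑(LinearMap.range ((ContinuousLinearMap.adjoint B : Y →ₗ[ℝ] X))) : Set X) := by
    refine ⟨y, ?_⟩
    rw [hadj]; rfl
  -- bound the distance
  have h1 : ‖x - A' y‖ < ε / 3 := by rwa [← dist_eq_norm]
  have h2 : ‖A' y - proj (Xn p.1) (A' y)‖ < ε / 3 := hN p.1 hp1
  have h3 : ‖proj (Xn p.1) (A' y) - v‖ ≤ ε / 3 := by
    have e1 : proj (Xn p.1) (A' y) - v = proj (Xn p.1) (A' y - A' (proj (Ym p.2) y)) := by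
      rw [hv, map_sub]
    rw [e1]
    have e2 : ‖proj (Xn p.1) (A' y - A' (proj (Ym p.2) y))‖ ≤ ‖A' y - A' (proj (Ym p.2) y)‖ :=
      proj_norm_le _ _
    have e3 : ‖A' y - A' (proj (Ym p.2) y)‖ ≤ ‖A'‖ * ‖y - proj (Ym p.2) y‖ := by
      rw [← map_sub]
      exact A'.le_opNorm _
    have e4 : ‖y - proj (Ym p.2) y‖ ≤ ε / (3 * (‖A'‖ + 1)) := (hM p.2 hp2).le
    have e5 : ‖A'‖ * ‖y - proj (Ym p.2) y‖ ≤ ‖A'‖ * (ε / (3 * (‖A'‖ + 1))) :=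
      mul_le_mul_of_nonneg_left e4 (norm_nonneg _)
    have e6 : ‖A'‖ * (ε / (3 * (‖A'‖ + 1))) ≤ ε / 3 := aux_arith _ _ (norm_nonneg _) hε
    linarith
  have hdist : ‖x - v‖ < ε := by
    have hsplit : x - v = (x - A' y) + (A' y - proj (Xn p.1) (A' y)) +
        (proj (Xn p.1) (A' y) - v) := by abel
    calc ‖x - v‖ ≤ ‖x - A' y‖ + ‖A' y - proj (Xn p.1) (A' y)‖ + ‖proj (Xn p.1) (A' y) - v‖ := by
          rw [hsplit]; exact norm_add₃_le
      _ < ε := by linarith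
  have hinf : Metric.infDist x
      (↑(LinearMap.range ((ContinuousLinearMap.adjoint B : Y →ₗ[ℝ] X))) : Set X) ≤ ‖x - v‖ := by
    rw [← dist_eq_norm]
    exact Metric.infDist_le_dist_of_mem hvmem
  rw [Real.dist_eq, sub_zero, abs_of_nonneg Metric.infDist_nonneg]
  exact lt_of_le_of_lt hinf hdist
end
end

section
/- Every x ∈ X admits a unique decomposition x = v̄ + w̄ + q̄ with v̄ ∈ R(A* A_{n,m}), w̄ ∈ N(Q_m A) ∩ X_n, and q̄ ∈ X_n^⊥; moreover v̄ = A* (A_{n,m}*)† x and w̄ = Π_{N(Q_m A) ∩ X_n} x, the orthogonal projection of x onto N(Q_m A) ∩ X_n. -/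
open ContinuousLinearMap Filter Topology RealInnerProductSpace

noncomputable section

section Helpers

variable {E : Type*} [NormedAddCommGroup E] [InnerProductSpace ℝ E]
  (K : Submodule ℝ E) [Submodule.HasOrthogonalProjection K]

lemma proj_mem (x : E) : proj K x ∈ K := Submodule.coe_mem _

lemma proj_eq_self {x : E} (h : x ∈ K) : proj K x = x :=
  Submodule.starProjection_eq_self_iff.mpr h

lemma proj_eq_zero {x : E} (h : x ∈ Kᗮ) : proj K x = 0 := by
  simp [_root_.proj, Submodule.orthogonalProjectionOnto_apply_of_mem_orthogonal h]

lemma sub_proj_mem (x : E) : x - proj K x ∈ Kᗮ :=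
  Submodule.sub_starProjection_mem_orthogonal x

lemma adjoint_proj [CompleteSpace E] [CompleteSpace K] :
    ContinuousLinearMap.adjoint (proj K) = proj K :=
  (isSelfAdjoint_starProjection K)

end Helpers

set_option maxHeartbeats 1000000 in
/-- unique decomposition `x = v̄ + w̄ + q̄` with `v̄ ∈ R(A* A_{n,m})`,
`w̄ ∈ N(Q_m A) ⊓ X_n`, `q̄ ∈ X_nᗮ`; moreover `v̄ = A* (A_{n,m}*)† x` and
`w̄ = Π_{N(Q_m A) ⊓ X_n} x`. -/
theorem stmt_5 {X Y : Type*} [NormedAddCommGroup X] [InnerProductSpace ℝ X] [CompleteSpace X]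
    [NormedAddCommGroup Y] [InnerProductSpace ℝ Y] [CompleteSpace Y]
    (A : X →L[ℝ] Y) (Xn : Submodule ℝ X) (Ym : Submodule ℝ Y)
    [FiniteDimensional ℝ Xn] [FiniteDimensional ℝ Ym]
    (Adags : X →L[ℝ] Y)
    (hdags : IsPseudoinverse (ContinuousLinearMap.adjoint (Amn A Xn Ym)) Adags) :
    (∀ x : X,
      ContinuousLinearMap.adjoint A (Adags x) ∈
        LinearMap.range ((ContinuousLinearMap.adjoint A).comp (Amn A Xn Ym) : X →ₗ[ℝ] X) ∧
      _root_.proj (LinearMap.ker ((_root_.proj Ym).comp A : X →ₗ[ℝ] Y) ⊓ Xn) x ∈ LinearMap.ker ((_root_.proj Ym).comp A : X →ₗ[ℝ] Y) ⊓ Xn ∧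
      x - ContinuousLinearMap.adjoint A (Adags x)
        - _root_.proj (LinearMap.ker ((_root_.proj Ym).comp A : X →ₗ[ℝ] Y) ⊓ Xn) x ∈ Xnᗮ) ∧
    (∀ x v w q : X,
      v ∈ LinearMap.range ((ContinuousLinearMap.adjoint A).comp (Amn A Xn Ym) : X →ₗ[ℝ] X) →
      w ∈ LinearMap.ker ((_root_.proj Ym).comp A : X →ₗ[ℝ] Y) ⊓ Xn → q ∈ Xnᗮ → x = v + w + q →
      v = ContinuousLinearMap.adjoint A (Adags x) ∧
      w = _root_.proj (LinearMap.ker ((_root_.proj Ym).comp A : X →ₗ[ℝ] Y) ⊓ Xn) x) := by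
  obtain ⟨h1, h2, h3, h4⟩ := hdags
  -- Abbreviations (all spelled out, no `set`)
  -- B := Amn A Xn Ym, Bs := adjoint B, As := adjoint A, Ads := adjoint Adags
  -- W := ker ((_root_.proj Ym).comp A) ⊓ Xn
  -- Derived operator identities
  have hAB : (ContinuousLinearMap.adjoint (Amn A Xn Ym)).comp Adags
      = (ContinuousLinearMap.adjoint Adags).comp (Amn A Xn Ym) := by
    conv_lhs => rw [← h3]
    rw [ContinuousLinearMap.adjoint_comp, ContinuousLinearMap.adjoint_adjoint]
  have hBA : Adags.comp (ContinuousLinearMap.adjoint (Amn A Xn Ym))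
      = (Amn A Xn Ym).comp (ContinuousLinearMap.adjoint Adags) := by
    conv_lhs => rw [← h4]
    rw [ContinuousLinearMap.adjoint_comp, ContinuousLinearMap.adjoint_adjoint]
  have hBB : ((Amn A Xn Ym).comp ((ContinuousLinearMap.adjoint Adags).comp (Amn A Xn Ym)))
      = Amn A Xn Ym := by
    have h5 := congrArg ContinuousLinearMap.adjoint h1
    rw [ContinuousLinearMap.adjoint_comp, h4, ContinuousLinearMap.adjoint_adjoint, hBA,
      ContinuousLinearMap.comp_assoc] at h5
    exact h5
  -- Pointwise versions
  have hABp : ∀ z : X, ContinuousLinearMap.adjoint (Amn A Xn Ym) (Adags z)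
      = ContinuousLinearMap.adjoint Adags (Amn A Xn Ym z) := fun z => by
    have := ContinuousLinearMap.ext_iff.mp hAB z
    simpa using this
  have hBAp : ∀ z : Y, Adags (ContinuousLinearMap.adjoint (Amn A Xn Ym) z)
      = Amn A Xn Ym (ContinuousLinearMap.adjoint Adags z) := fun z => by
    have := ContinuousLinearMap.ext_iff.mp hBA z
    simpa using this
  have hBBp : ∀ z : X, Amn A Xn Ym (ContinuousLinearMap.adjoint Adags (Amn A Xn Ym z))
      = Amn A Xn Ym z := fun z => by
    have := ContinuousLinearMap.ext_iff.mp hBB z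
    simpa using this
  have h2p : ∀ z : X, Adags (ContinuousLinearMap.adjoint (Amn A Xn Ym) (Adags z))
      = Adags z := fun z => by
    have := ContinuousLinearMap.ext_iff.mp h2 z
    simpa using this
  -- Basic formulas
  have hBapp : ∀ z : X, Amn A Xn Ym z = _root_.proj Ym (A (_root_.proj Xn z)) := fun z => rfl
  have hBmem : ∀ z : X, Amn A Xn Ym z ∈ Ym := fun z => by
    rw [hBapp]; exact proj_mem Ym _
  have hBq : ∀ q ∈ Xnᗮ, Amn A Xn Ym q = 0 := fun q hq => by
    rw [hBapp, proj_eq_zero Xn hq]; simp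
  have hBw : ∀ w ∈ LinearMap.ker ((_root_.proj Ym).comp A : X →ₗ[ℝ] Y) ⊓ Xn, Amn A Xn Ym w = 0 := fun w hw => by
    rw [hBapp, proj_eq_self Xn hw.2]
    have := hw.1
    simpa using this
  have f1 : ∀ z : X, Amn A Xn Ym z = 0 → Adags z = 0 := fun z hz => by
    calc Adags z = Adags (ContinuousLinearMap.adjoint (Amn A Xn Ym) (Adags z)) := (h2p z).symm
      _ = Adags (ContinuousLinearMap.adjoint Adags (Amn A Xn Ym z)) := by rw [hABp]
      _ = 0 := by rw [hz]; simp
  have hAdagsYm : ∀ z : X, Adags z ∈ Ym := fun z => by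
    have : Adags z = Amn A Xn Ym (ContinuousLinearMap.adjoint Adags (Adags z)) := by
      rw [← hBAp, h2p]
    rw [this]; exact hBmem _
  have hBsapp : ∀ y : Y, ContinuousLinearMap.adjoint (Amn A Xn Ym) y
      = _root_.proj Xn (ContinuousLinearMap.adjoint A (_root_.proj Ym y)) := fun y => by
    have : ContinuousLinearMap.adjoint (Amn A Xn Ym)
        = ((_root_.proj Xn).comp ((ContinuousLinearMap.adjoint A).comp (_root_.proj Ym))) := by
      simp only [Amn, ContinuousLinearMap.adjoint_comp, adjoint_proj,
        ContinuousLinearMap.comp_assoc]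
    rw [this]; rfl
  have hBsXn : ∀ y : Y, ContinuousLinearMap.adjoint (Amn A Xn Ym) y ∈ Xn := fun y => by
    rw [hBsapp]; exact proj_mem Xn _
  have hprojXnAs : ∀ y ∈ Ym, _root_.proj Xn (ContinuousLinearMap.adjoint A y)
      = ContinuousLinearMap.adjoint (Amn A Xn Ym) y := fun y hy => by
    rw [hBsapp, proj_eq_self Ym hy]
  -- B (A* (Adags z)) = B z
  have hBAs : ∀ z : X, Amn A Xn Ym (ContinuousLinearMap.adjoint A (Adags z))
      = Amn A Xn Ym z := fun z => by
    calc Amn A Xn Ym (ContinuousLinearMap.adjoint A (Adags z))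
        = _root_.proj Ym (A (_root_.proj Xn (ContinuousLinearMap.adjoint A (Adags z)))) := hBapp _
      _ = _root_.proj Ym (A (ContinuousLinearMap.adjoint (Amn A Xn Ym) (Adags z))) := by
          rw [hprojXnAs _ (hAdagsYm z)]
      _ = _root_.proj Ym (A (_root_.proj Xn (ContinuousLinearMap.adjoint (Amn A Xn Ym) (Adags z)))) := by
          rw [proj_eq_self Xn (hBsXn _)]
      _ = Amn A Xn Ym (ContinuousLinearMap.adjoint (Amn A Xn Ym) (Adags z)) := (hBapp _).symm
      _ = Amn A Xn Ym (ContinuousLinearMap.adjoint Adags (Amn A Xn Ym z)) := by rw [hABp]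
      _ = Amn A Xn Ym z := hBBp z
  -- Adags (A* (B u)) = B u
  have hAdagsAsB : ∀ u : X, Adags (ContinuousLinearMap.adjoint A (Amn A Xn Ym u))
      = Amn A Xn Ym u := fun u => by
    have hmem : ContinuousLinearMap.adjoint A (Amn A Xn Ym u)
        - ContinuousLinearMap.adjoint (Amn A Xn Ym) (Amn A Xn Ym u) ∈ Xnᗮ := by
      rw [← hprojXnAs _ (hBmem u)]
      exact sub_proj_mem Xn _
    calc Adags (ContinuousLinearMap.adjoint A (Amn A Xn Ym u))
        = Adags (ContinuousLinearMap.adjoint (Amn A Xn Ym) (Amn A Xn Ym u))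
          + Adags (ContinuousLinearMap.adjoint A (Amn A Xn Ym u)
            - ContinuousLinearMap.adjoint (Amn A Xn Ym) (Amn A Xn Ym u)) := by
          rw [← map_add]; congr 1; abel
      _ = Adags (ContinuousLinearMap.adjoint (Amn A Xn Ym) (Amn A Xn Ym u)) + 0 := by
          rw [f1 _ (hBq _ hmem)]
      _ = Amn A Xn Ym u := by rw [add_zero, hBAp, hBBp]
  -- range elements are orthogonal to W
  have hvperpW : ∀ u : X, ∀ w ∈ LinearMap.ker ((_root_.proj Ym).comp A : X →ₗ[ℝ] Y) ⊓ Xn,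
      ⟪ContinuousLinearMap.adjoint A (Amn A Xn Ym u), w⟫ = 0 := fun u w hw => by
    rw [ContinuousLinearMap.adjoint_inner_left]
    have hker : _root_.proj Ym (A w) = 0 := by have := hw.1; simpa using this
    have hAw : A w ∈ Ymᗮ := by
      have := sub_proj_mem Ym (A w)
      rwa [hker, sub_zero] at this
    exact Submodule.inner_right_of_mem_orthogonal (hBmem u) hAw
  constructor
  · -- existence / explicit formulas
    intro x
    refine ⟨⟨ContinuousLinearMap.adjoint Adags (Adags x), ?_⟩, proj_mem _ x, ?_⟩
    · -- range membership
      have : Amn A Xn Ym (ContinuousLinearMap.adjoint Adags (Adags x)) = Adags x := by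
        rw [← hBAp, h2p]
      show ContinuousLinearMap.adjoint A
          (Amn A Xn Ym (ContinuousLinearMap.adjoint Adags (Adags x)))
        = ContinuousLinearMap.adjoint A (Adags x)
      rw [this]
    · -- x - A* Adags x - _root_.proj W x ∈ Xnᗮ
      rw [Submodule.mem_orthogonal]
      intro u hu
      have hBz : Amn A Xn Ym (x - ContinuousLinearMap.adjoint A (Adags x)
          - _root_.proj (LinearMap.ker ((_root_.proj Ym).comp A : X →ₗ[ℝ] Y) ⊓ Xn) x) = 0 := by
        rw [map_sub, map_sub, hBAs x,
          hBw _ (proj_mem (LinearMap.ker ((_root_.proj Ym).comp A : X →ₗ[ℝ] Y) ⊓ Xn) x)]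
        simp
      have hrXn : ContinuousLinearMap.adjoint (Amn A Xn Ym) (Adags u) ∈ Xn := hBsXn _
      have hw'W : u - ContinuousLinearMap.adjoint (Amn A Xn Ym) (Adags u)
          ∈ LinearMap.ker ((_root_.proj Ym).comp A : X →ₗ[ℝ] Y) ⊓ Xn := by
        constructor
        · have hQAu : _root_.proj Ym (A u) = Amn A Xn Ym u := by
            rw [hBapp, proj_eq_self Xn hu]
          have hQAr : _root_.proj Ym (A (ContinuousLinearMap.adjoint (Amn A Xn Ym) (Adags u)))
              = Amn A Xn Ym u := by
            calc _root_.proj Ym (A (ContinuousLinearMap.adjoint (Amn A Xn Ym) (Adags u)))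
                = _root_.proj Ym (A (_root_.proj Xn (ContinuousLinearMap.adjoint (Amn A Xn Ym) (Adags u)))) := by
                  rw [proj_eq_self Xn hrXn]
              _ = Amn A Xn Ym (ContinuousLinearMap.adjoint (Amn A Xn Ym) (Adags u)) :=
                  (hBapp _).symm
              _ = Amn A Xn Ym (ContinuousLinearMap.adjoint Adags (Amn A Xn Ym u)) := by rw [hABp]
              _ = Amn A Xn Ym u := hBBp u
          refine LinearMap.mem_ker.mpr ?_
          show _root_.proj Ym (A (u - ContinuousLinearMap.adjoint (Amn A Xn Ym) (Adags u))) = 0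
          rw [map_sub, map_sub, hQAu, hQAr, sub_self]
        · exact Submodule.sub_mem Xn hu hrXn
      have hsum : (ContinuousLinearMap.adjoint (Amn A Xn Ym) (Adags u))
          + (u - ContinuousLinearMap.adjoint (Amn A Xn Ym) (Adags u)) = u := by abel
      rw [← hsum, inner_add_left]
      have hterm1 : ⟪ContinuousLinearMap.adjoint (Amn A Xn Ym) (Adags u),
          x - ContinuousLinearMap.adjoint A (Adags x)
          - _root_.proj (LinearMap.ker ((_root_.proj Ym).comp A : X →ₗ[ℝ] Y) ⊓ Xn) x⟫ = 0 := by
        rw [ContinuousLinearMap.adjoint_inner_left, hBz, inner_zero_right]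
      have hterm2 : ⟪u - ContinuousLinearMap.adjoint (Amn A Xn Ym) (Adags u),
          x - ContinuousLinearMap.adjoint A (Adags x)
          - _root_.proj (LinearMap.ker ((_root_.proj Ym).comp A : X →ₗ[ℝ] Y) ⊓ Xn) x⟫ = 0 := by
        have hz' : x - ContinuousLinearMap.adjoint A (Adags x)
            - _root_.proj (LinearMap.ker ((_root_.proj Ym).comp A : X →ₗ[ℝ] Y) ⊓ Xn) x
            = (x - _root_.proj (LinearMap.ker ((_root_.proj Ym).comp A : X →ₗ[ℝ] Y) ⊓ Xn) x)
              - ContinuousLinearMap.adjoint A (Adags x) := by abel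
        rw [hz', inner_sub_right]
        have ha : ⟪u - ContinuousLinearMap.adjoint (Amn A Xn Ym) (Adags u),
            x - _root_.proj (LinearMap.ker ((_root_.proj Ym).comp A : X →ₗ[ℝ] Y) ⊓ Xn) x⟫ = 0 :=
          Submodule.inner_right_of_mem_orthogonal hw'W
            (sub_proj_mem (LinearMap.ker ((_root_.proj Ym).comp A : X →ₗ[ℝ] Y) ⊓ Xn) x)
        have hb : ⟪u - ContinuousLinearMap.adjoint (Amn A Xn Ym) (Adags u),
            ContinuousLinearMap.adjoint A (Adags x)⟫ = 0 := by
          rw [ContinuousLinearMap.adjoint_inner_right]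
          have hker : _root_.proj Ym (A (u - ContinuousLinearMap.adjoint (Amn A Xn Ym) (Adags u)))
              = 0 := by have := hw'W.1; simpa using this
          have hAw : A (u - ContinuousLinearMap.adjoint (Amn A Xn Ym) (Adags u)) ∈ Ymᗮ := by
            have := sub_proj_mem Ym (A (u - ContinuousLinearMap.adjoint (Amn A Xn Ym) (Adags u)))
            rwa [hker, sub_zero] at this
          exact Submodule.inner_left_of_mem_orthogonal (hAdagsYm x) hAw
        rw [ha, hb, sub_zero]
      rw [hterm1, hterm2, add_zero]
  · -- uniqueness
    intro x v w q hv hw hq hx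
    obtain ⟨u, hu⟩ := hv
    have hv' : ContinuousLinearMap.adjoint A (Amn A Xn Ym u) = v := by
      simpa using hu
    have hAdq : Adags q = 0 := f1 _ (hBq q hq)
    have hAdw : Adags w = 0 := f1 _ (hBw w hw)
    have hAdv : Adags v = Amn A Xn Ym u := by rw [← hv']; exact hAdagsAsB u
    have hAdx : Adags x = Amn A Xn Ym u := by
      rw [hx, map_add, map_add, hAdq, hAdw, hAdv, add_zero, add_zero]
    constructor
    · rw [hAdx, hv']
    · have hqW : q ∈ (LinearMap.ker ((_root_.proj Ym).comp A : X →ₗ[ℝ] Y) ⊓ Xn)ᗮ :=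
        Submodule.orthogonal_le inf_le_right hq
      have hvW : v ∈ (LinearMap.ker ((_root_.proj Ym).comp A : X →ₗ[ℝ] Y) ⊓ Xn)ᗮ := by
        rw [Submodule.mem_orthogonal]
        intro t ht
        rw [real_inner_comm, ← hv']
        exact hvperpW u t ht
      have : _root_.proj (LinearMap.ker ((_root_.proj Ym).comp A : X →ₗ[ℝ] Y) ⊓ Xn) x = w := by
        rw [hx, map_add, map_add, proj_eq_zero _ hvW, proj_eq_zero _ hqW,
          proj_eq_self _ hw, zero_add, add_zero]
      exact this.symm

end
end

section
/- Let (X_n) and (Y_n) be sequences of closed subspaces of a Hilbert space H with orthogonal projections Π_{X_n}, Π_{Y_n}. The following are equivalent: (i) there exists ρ < 1 with sup_n ‖Π_{X_n} Π_{Y_n}‖ ≤ ρ; (ii) there exists τ > 0 such that for all n and all x ∈ X_n, y ∈ Y_n, ‖x + y‖² ≥ τ ‖x‖²; (iii) there exists τ' > 0 such that for all n and all x ∈ X_n, y ∈ Y_n, ‖x + y‖² ≥ τ' ‖y‖². -/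
open ContinuousLinearMap Filter Topology
open RealInnerProductSpace

set_option linter.unusedSectionVars false

noncomputable section

section aux

variable {H : Type*} [NormedAddCommGroup H] [InnerProductSpace ℝ H] [CompleteSpace H]

lemma inner_bound_of_norm_bound (X Y : Submodule ℝ H) [Submodule.HasOrthogonalProjection X]
    [Submodule.HasOrthogonalProjection Y] {ρ : ℝ} (h : ‖(_root_.proj X).comp (_root_.proj Y)‖ ≤ ρ)
    {x y : H} (hx : x ∈ X) (hy : y ∈ Y) : |(⟪x, y⟫)| ≤ ρ * ‖x‖ * ‖y‖ := by
  have key : ⟪x, y⟫ = ⟪x, ((_root_.proj X).comp (_root_.proj Y)) y⟫ := by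
    simp only [_root_.proj, ContinuousLinearMap.comp_apply, Submodule.subtypeL_apply,
      ContinuousLinearMap.coe_coe]
    rw [← Submodule.starProjection_apply, ← Submodule.starProjection_apply,
      Submodule.starProjection_eq_self_iff.mpr hy,
      ← Submodule.inner_starProjection_left_eq_right,
      Submodule.starProjection_eq_self_iff.mpr hx]
  calc |(⟪x, y⟫)| = |⟪x, ((_root_.proj X).comp (_root_.proj Y)) y⟫| := by rw [key]
    _ ≤ ‖x‖ * ‖((_root_.proj X).comp (_root_.proj Y)) y‖ := abs_real_inner_le_norm _ _
    _ ≤ ‖x‖ * (ρ * ‖y‖) := by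
        refine mul_le_mul_of_nonneg_left ?_ (norm_nonneg _)
        exact (le_opNorm _ _).trans (mul_le_mul_of_nonneg_right h (norm_nonneg _))
    _ = ρ * ‖x‖ * ‖y‖ := by ring

lemma norm_bound_of_inner_bound (X Y : Submodule ℝ H) [Submodule.HasOrthogonalProjection X]
    [Submodule.HasOrthogonalProjection Y] {ρ : ℝ} (hρ : 0 ≤ ρ)
    (h : ∀ x ∈ X, ∀ y ∈ Y, |(⟪x, y⟫)| ≤ ρ * ‖x‖ * ‖y‖) :
    ‖(_root_.proj X).comp (_root_.proj Y)‖ ≤ ρ := by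
  refine opNorm_le_bound _ hρ fun v => ?_
  set y : H := (Submodule.orthogonalProjectionOnto Y v : H) with hy
  set x : H := (Submodule.orthogonalProjectionOnto X y : H) with hx
  have hTv : ((_root_.proj X).comp (_root_.proj Y)) v = x := by
    simp [_root_.proj, hx, hy]
  rw [hTv]
  have hyY : y ∈ Y := SetLike.coe_mem _
  have hxX : x ∈ X := SetLike.coe_mem _
  have hyv : ‖y‖ ≤ ‖v‖ := by
    calc ‖y‖ = ‖(Submodule.orthogonalProjectionOnto Y) v‖ := rfl
      _ ≤ ‖(Submodule.orthogonalProjectionOnto Y : H →L[ℝ] Y)‖ * ‖v‖ := le_opNorm _ _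
      _ ≤ 1 * ‖v‖ := mul_le_mul_of_nonneg_right (Submodule.orthogonalProjectionOnto_norm_le Y) (norm_nonneg _)
      _ = ‖v‖ := one_mul _
  have hx2 : ‖x‖ ^ 2 = ⟪x, y⟫ := by
    have h1 : ⟪x, y⟫ = ⟪y, x⟫ := real_inner_comm _ _
    have h2 : ⟪y, (Submodule.orthogonalProjectionOnto X x : H)⟫ = ⟪y, x⟫ := by
      rw [← Submodule.starProjection_apply, Submodule.starProjection_eq_self_iff.mpr hxX]
    have h3 : ⟪(Submodule.orthogonalProjectionOnto X y : H), x⟫ = ⟪y, (Submodule.orthogonalProjectionOnto X x : H)⟫ := by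
      rw [← Submodule.starProjection_apply, ← Submodule.starProjection_apply]
      exact Submodule.inner_starProjection_left_eq_right X y x
    rw [h1, ← h2, ← h3, ← hx, real_inner_self_eq_norm_sq]
  have hb : ‖x‖ ^ 2 ≤ ρ * ‖x‖ * ‖y‖ := by
    rw [hx2]
    exact (le_abs_self _).trans (h x hxX y hyY)
  have : ‖x‖ ≤ ρ * ‖y‖ := by
    rcases eq_or_lt_of_le (norm_nonneg x) with h0 | h0
    · rw [← h0]; positivity
    · nlinarith
  calc ‖x‖ ≤ ρ * ‖y‖ := this
    _ ≤ ρ * ‖v‖ := mul_le_mul_of_nonneg_left hyv hρ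


  

/-- The key equivalence for a sequence of subspace pairs. -/
lemma key_iff (Xs Ys : ℕ → Submodule ℝ H) :
    (∃ τ : ℝ, 0 < τ ∧ ∀ n, ∀ x ∈ Xs n, ∀ y ∈ Ys n, τ * ‖x‖ ^ 2 ≤ ‖x + y‖ ^ 2) ↔
    (∃ ρ : ℝ, 0 ≤ ρ ∧ ρ < 1 ∧ ∀ n, ∀ x ∈ Xs n, ∀ y ∈ Ys n, |(⟪x, y⟫)| ≤ ρ * ‖x‖ * ‖y‖) := by
  constructor
  · rintro ⟨τ, hτ, h⟩
    set t : ℝ := min τ (1/2) with ht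
    have ht0 : 0 < t := lt_min hτ (by norm_num)
    have ht1 : t ≤ 1/2 := min_le_right _ _
    set ρ : ℝ := Real.sqrt (1 - t) with hρdef
    have hρ0 : 0 ≤ ρ := Real.sqrt_nonneg _
    have hρsq : ρ ^ 2 = 1 - t := Real.sq_sqrt (by linarith)
    have hρ1 : ρ < 1 := by nlinarith
    refine ⟨ρ, hρ0, hρ1, fun n x hx y hy => ?_⟩
    rcases eq_or_ne y 0 with rfl | hy0
    · simp
    have hY2 : (0:ℝ) < ‖y‖ ^ 2 := pow_pos (norm_pos_iff.mpr hy0) 2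
    set a : ℝ := ⟪x, y⟫ with ha
    set c : ℝ := a / ‖y‖ ^ 2 with hc
    have happ := h n x hx ((-c) • y) (Submodule.smul_mem _ _ hy)
    have hexp : ‖x + (-c) • y‖ ^ 2 = ‖x‖ ^ 2 + 2 * (-c) * a + c ^ 2 * ‖y‖ ^ 2 := by
      rw [norm_add_sq_real, real_inner_smul_right, norm_smul]
      simp [mul_pow, ← ha]
      ring
    have hkey : a ^ 2 ≤ (1 - t) * (‖x‖ ^ 2 * ‖y‖ ^ 2) := by
      rw [hexp] at happ
      have hc2 : c * ‖y‖ ^ 2 = a := by rw [hc, div_mul_cancel₀ _ hY2.ne']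
      have htτ : t * ‖x‖ ^ 2 ≤ τ * ‖x‖ ^ 2 := by
        have := min_le_left τ (1/2)
        nlinarith [sq_nonneg ‖x‖]
      nlinarith [happ, htτ]
    have : a ^ 2 ≤ (ρ * ‖x‖ * ‖y‖) ^ 2 := by rw [mul_pow, mul_pow, hρsq]; linarith [hkey]
    exact abs_le_of_sq_le_sq this (by positivity)
  · rintro ⟨ρ, hρ0, hρ1, h⟩
    refine ⟨1 - ρ ^ 2, by nlinarith, fun n x hx y hy => ?_⟩
    have hb := h n x hx y hy
    have h1 := neg_abs_le (⟪x, y⟫)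
    rw [norm_add_sq_real]
    nlinarith [sq_nonneg (ρ * ‖x‖ - ‖y‖)]

end aux

/-- equivalence of the uniform angle condition
`sup_n ‖Π_{X_n} Π_{Y_n}‖ ≤ ρ < 1` with the uniform coercivity estimates
`‖x + y‖² ≥ τ ‖x‖²` and `‖x + y‖² ≥ τ' ‖y‖²`. -/
theorem stmt_7 {H : Type*} [NormedAddCommGroup H] [InnerProductSpace ℝ H] [CompleteSpace H]
    (Xs Ys : ℕ → Submodule ℝ H)
    (hXc : ∀ n, IsClosed ((Xs n : Set H))) (hYc : ∀ n, IsClosed ((Ys n : Set H)))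
    [∀ n, Submodule.HasOrthogonalProjection (Xs n)] [∀ n, Submodule.HasOrthogonalProjection (Ys n)] :
    ((∃ ρ : ℝ, ρ < 1 ∧ ∀ n, ‖(proj (Xs n)).comp (proj (Ys n))‖ ≤ ρ) ↔
      (∃ τ : ℝ, 0 < τ ∧ ∀ n, ∀ x ∈ Xs n, ∀ y ∈ Ys n, τ * ‖x‖ ^ 2 ≤ ‖x + y‖ ^ 2)) ∧
    ((∃ τ : ℝ, 0 < τ ∧ ∀ n, ∀ x ∈ Xs n, ∀ y ∈ Ys n, τ * ‖x‖ ^ 2 ≤ ‖x + y‖ ^ 2) ↔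
      (∃ τ' : ℝ, 0 < τ' ∧ ∀ n, ∀ x ∈ Xs n, ∀ y ∈ Ys n, τ' * ‖y‖ ^ 2 ≤ ‖x + y‖ ^ 2)) := by
  have sym : (∃ ρ : ℝ, 0 ≤ ρ ∧ ρ < 1 ∧
        ∀ n, ∀ x ∈ Xs n, ∀ y ∈ Ys n, |(⟪x, y⟫)| ≤ ρ * ‖x‖ * ‖y‖) ↔
      (∃ ρ : ℝ, 0 ≤ ρ ∧ ρ < 1 ∧
        ∀ n, ∀ x ∈ Ys n, ∀ y ∈ Xs n, |(⟪x, y⟫)| ≤ ρ * ‖x‖ * ‖y‖) := by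
    constructor <;> rintro ⟨ρ, h0, h1, hb⟩ <;> refine ⟨ρ, h0, h1, fun n u hu v hv => ?_⟩ <;>
      · rw [real_inner_comm]
        calc |(⟪v, u⟫)| ≤ ρ * ‖v‖ * ‖u‖ := hb n v hv u hu
          _ = ρ * ‖u‖ * ‖v‖ := by ring
  have conv : (∃ τ' : ℝ, 0 < τ' ∧ ∀ n, ∀ x ∈ Xs n, ∀ y ∈ Ys n, τ' * ‖y‖ ^ 2 ≤ ‖x + y‖ ^ 2) ↔
      (∃ τ : ℝ, 0 < τ ∧ ∀ n, ∀ x ∈ Ys n, ∀ y ∈ Xs n, τ * ‖x‖ ^ 2 ≤ ‖x + y‖ ^ 2) := by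
    constructor <;> rintro ⟨τ, h0, h⟩ <;> refine ⟨τ, h0, fun n u hu v hv => ?_⟩
    · rw [add_comm]; exact h n v hv u hu
    · rw [add_comm u v]; exact h n v hv u hu
  constructor
  · constructor
    · rintro ⟨ρ, hρ1, hn⟩
      refine (key_iff Xs Ys).mpr ⟨max ρ 0, le_max_right _ _, max_lt hρ1 one_pos,
        fun n x hx y hy => inner_bound_of_norm_bound _ _ ((hn n).trans (le_max_left _ _)) hx hy⟩
    · intro h
      obtain ⟨ρ, h0, h1, hb⟩ := (key_iff Xs Ys).mp h
      exact ⟨ρ, h1, fun n => norm_bound_of_inner_bound _ _ h0 (hb n)⟩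
  · exact (key_iff Xs Ys).trans (sym.trans (((key_iff Ys Xs).symm).trans conv.symm))

end
end

section
/- If for closed subspaces X, Y of a Hilbert space there exists τ > 0 such that ‖x + y‖² ≥ τ ‖x‖² for all x ∈ X, y ∈ Y, then ‖Π_X Π_Y‖ ≤ (1 − τ²)^{1/2} < 1. -/
open ContinuousLinearMap Filter Topology

noncomputable section

/-- if `‖x + y‖² ≥ τ ‖x‖²` on `X × Y` with `τ > 0`, then
`‖Π_X Π_Y‖ ≤ √(1 − τ²) < 1`. -/
theorem stmt_9 {H : Type*} [NormedAddCommGroup H] [InnerProductSpace ℝ H] [CompleteSpace H]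
    (Xs Ys : Submodule ℝ H)
    (hXc : IsClosed ((Xs : Set H))) (hYc : IsClosed ((Ys : Set H)))
    [Submodule.HasOrthogonalProjection Xs] [Submodule.HasOrthogonalProjection Ys]
    (τ : ℝ) (hτ : 0 < τ)
    (hcoer : ∀ x ∈ Xs, ∀ y ∈ Ys, τ * ‖x‖ ^ 2 ≤ ‖x + y‖ ^ 2) :
    ‖(proj Xs).comp (proj Ys)‖ ≤ Real.sqrt (1 - τ ^ 2) ∧
      Real.sqrt (1 - τ ^ 2) < 1 := by
  constructor
  · apply ContinuousLinearMap.opNorm_le_bound _ (Real.sqrt_nonneg _)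
    intro h
    set y : H := (Submodule.orthogonalProjectionOnto Ys h : H) with hy
    set x : H := (Submodule.orthogonalProjectionOnto Xs y : H) with hx
    have happ : ((proj Xs).comp (proj Ys)) h = x := by
      simp [_root_.proj, hx, hy]
    rw [happ]
    have hyh : ‖y‖ ≤ ‖h‖ := by
      calc ‖y‖ ≤ ‖Submodule.orthogonalProjectionOnto Ys‖ * ‖h‖ := by
            simpa [hy] using (Submodule.orthogonalProjectionOnto Ys : H →L[ℝ] Ys).le_opNorm h
        _ ≤ 1 * ‖h‖ := by
            exact mul_le_mul_of_nonneg_right (Submodule.orthogonalProjectionOnto_norm_le Ys) (norm_nonneg _)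
        _ = ‖h‖ := one_mul _
    by_cases hx0 : x = 0
    · rw [hx0, norm_zero]
      positivity
    · have hxn : (0:ℝ) < ‖x‖ := norm_pos_iff.mpr hx0
      have hy0 : y ≠ 0 := by
        intro h0
        apply hx0
        rw [hx, h0]
        simp
      have hyn : (0:ℝ) < ‖y‖ := norm_pos_iff.mpr hy0
      -- key: ⟪x, y⟫ = ‖x‖²
      have hinner : inner ℝ x y = ‖x‖ ^ 2 := by
        have h1 : inner ℝ (y - x) x = (0:ℝ) :=
          Submodule.starProjection_inner_eq_zero (K := Xs) y x (by rw [hx]; exact SetLike.coe_mem _)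
        have := real_inner_self_eq_norm_sq x
        have h2 : inner ℝ y x - inner ℝ x x = (0:ℝ) := by rwa [inner_sub_left] at h1
        rw [real_inner_comm]
        nlinarith [real_inner_self_eq_norm_sq x]
      set t : ℝ := ‖x‖ ^ 2 / ‖y‖ ^ 2 with ht
      have hmem : -(t • y) ∈ Ys := Ys.neg_mem (Ys.smul_mem t (SetLike.coe_mem _))
      have hc := hcoer x (SetLike.coe_mem _) _ hmem
      have hexp : ‖x + -(t • y)‖ ^ 2 = ‖x‖ ^ 2 - 2 * t * ‖x‖ ^ 2 + t ^ 2 * ‖y‖ ^ 2 := by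
        rw [← sub_eq_add_neg, @norm_sub_sq_real, real_inner_smul_right, hinner, norm_smul,
          Real.norm_eq_abs, abs_of_nonneg (by positivity : (0:ℝ) ≤ t)]
        ring
      rw [hexp] at hc
      -- derive ‖x‖² ≤ (1 - τ) ‖y‖²
      have hkey : ‖x‖ ^ 2 ≤ (1 - τ) * ‖y‖ ^ 2 := by
        have h4 : t * ‖y‖ ^ 2 = ‖x‖ ^ 2 := by
          rw [ht]; field_simp
        have h5 : t ^ 2 * ‖y‖ ^ 2 = t * ‖x‖ ^ 2 := by rw [sq, mul_assoc, h4]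
        rw [h5] at hc
        have hx2 : (0:ℝ) < ‖x‖ ^ 2 := by positivity
        have h6 : t ≤ 1 - τ := by nlinarith
        calc ‖x‖ ^ 2 = t * ‖y‖ ^ 2 := h4.symm
          _ ≤ (1 - τ) * ‖y‖ ^ 2 := mul_le_mul_of_nonneg_right h6 (sq_nonneg _)
      have hτ1 : τ ≤ 1 := by
        have hx2 : (0:ℝ) < ‖x‖ ^ 2 := by positivity
        have hy2 : (0:ℝ) < ‖y‖ ^ 2 := by positivity
        nlinarith
      have hkey2 : ‖x‖ ^ 2 ≤ (1 - τ ^ 2) * ‖h‖ ^ 2 := by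
        have : (1 - τ) * ‖y‖ ^ 2 ≤ (1 - τ ^ 2) * ‖h‖ ^ 2 := by
          have h5 : ‖y‖ ^ 2 ≤ ‖h‖ ^ 2 := by nlinarith [norm_nonneg y]
          nlinarith [mul_le_mul_of_nonneg_left h5 (by linarith : (0:ℝ) ≤ 1 - τ),
            mul_nonneg (by linarith : (0:ℝ) ≤ 1 - τ) hτ.le, sq_nonneg ‖h‖]
        linarith
      calc ‖x‖ = Real.sqrt (‖x‖ ^ 2) := by rw [Real.sqrt_sq (norm_nonneg _)]
        _ ≤ Real.sqrt ((1 - τ ^ 2) * ‖h‖ ^ 2) := Real.sqrt_le_sqrt hkey2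
        _ = Real.sqrt (1 - τ ^ 2) * ‖h‖ := by
            rw [Real.sqrt_mul (by nlinarith : (0:ℝ) ≤ 1 - τ ^ 2), Real.sqrt_sq (norm_nonneg _)]
  · exact (Real.sqrt_lt' one_pos).mpr (by nlinarith)
end
end

section
/- If the space condition closure(∪_n (N(A) ∩ X_n)) = N(A) holds, then for x† ∈ N(A)^⊥ the approximations x_{n,m} = A_{n,m}† A x† converge weakly to x† if and only if sup_{n,m} ‖x_{n,m}‖ < ∞. -/
open ContinuousLinearMap Filter Topology

noncomputable section

section Aux

set_option linter.unusedSectionVars false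

variable {X Y : Type*} [NormedAddCommGroup X] [InnerProductSpace ℝ X] [CompleteSpace X]
  [NormedAddCommGroup Y] [InnerProductSpace ℝ Y] [CompleteSpace Y]

local notation "⟪" x ", " y "⟫" => @inner ℝ _ _ x y

variable {K : Submodule ℝ X} [Submodule.HasOrthogonalProjection K]

lemma proj_mem_s19 (v : X) : proj K v ∈ K := (Submodule.orthogonalProjectionOnto K v).2

lemma proj_eq_self_s19 {v : X} (hv : v ∈ K) : proj K v = v :=
  Submodule.starProjection_eq_self_iff.2 hv

lemma proj_eq_zero_s19 {v : X} (hv : v ∈ Kᗮ) : proj K v = 0 := by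
  show ((Submodule.orthogonalProjectionOnto K v : K) : X) = 0
  rw [Submodule.orthogonalProjectionOnto_eq_zero_iff.2 hv]; rfl

lemma inner_proj_left_right (u v : X) : ⟪proj K u, v⟫ = ⟪u, proj K v⟫ :=
  Submodule.inner_starProjection_left_eq_right (K := K) u v

lemma sub_proj_inner (v : X) {w : X} (hw : w ∈ K) : ⟪v - proj K v, w⟫ = 0 :=
  Submodule.starProjection_inner_eq_zero v w hw

lemma norm_sub_proj_le (v : X) {w : X} (hw : w ∈ K) : ‖v - proj K v‖ ≤ ‖v - w‖ := by
  have h := Submodule.starProjection_minimal (U := K) v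
  show ‖v - K.starProjection v‖ ≤ _
  rw [h]
  exact ciInf_le ⟨0, Set.forall_mem_range.mpr fun _ => norm_nonneg _⟩ (⟨w, hw⟩ : K)

lemma norm_proj_le (v : X) : ‖proj K v‖ ≤ ‖v‖ := by
  have h : ⟪proj K v, proj K v⟫ = ⟪v, proj K (proj K v)⟫ := inner_proj_left_right _ _
  rw [proj_eq_self_s19 (proj_mem_s19 v)] at h
  have h2 : ‖proj K v‖ ^ 2 ≤ ‖v‖ * ‖proj K v‖ := by
    rw [← real_inner_self_eq_norm_sq, h]
    exact (real_inner_le_norm _ _)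
  nlinarith [norm_nonneg (proj K v), norm_nonneg v]

lemma proj_proj_of_le {K' : Submodule ℝ X} [Submodule.HasOrthogonalProjection K'] (h : K ≤ K') (v : X) :
    proj K (proj K' v) = proj K v := by
  show (↑(Submodule.orthogonalProjectionOnto K (K'.starProjection v)) : X) = _
  rw [Submodule.orthogonalProjectionOnto_starProjection_of_le h]; rfl

lemma tendsto_proj_iSup {K : ℕ → Submodule ℝ X} [∀ m, Submodule.HasOrthogonalProjection (K m)]
    (hK : Monotone K) (hd : Dense (↑(⨆ m, K m) : Set X)) (v : X) :
    Tendsto (fun m => proj (K m) v) atTop (𝓝 v) := by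
  rw [Metric.tendsto_atTop]
  intro ε hε
  have hv : v ∈ closure (↑(⨆ m, K m) : Set X) := hd v
  obtain ⟨w, hw, hwd⟩ := Metric.mem_closure_iff.1 hv ε hε
  obtain ⟨N, hN⟩ := (Submodule.mem_iSup_of_directed _ hK.directed_le).1 hw
  refine ⟨N, fun m hm => ?_⟩
  have : ‖v - proj (K m) v‖ ≤ ‖v - w‖ := norm_sub_proj_le v (hK hm hN)
  rw [dist_comm, dist_eq_norm]
  calc ‖v - proj (K m) v‖ ≤ ‖v - w‖ := this
    _ < ε := by rwa [← dist_eq_norm]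

end Aux


section Penrose

set_option linter.unusedSectionVars false

variable {X Y : Type*} [NormedAddCommGroup X] [InnerProductSpace ℝ X] [CompleteSpace X]
  [NormedAddCommGroup Y] [InnerProductSpace ℝ Y] [CompleteSpace Y]

local notation "⟪" x ", " y "⟫" => @inner ℝ _ _ x y

variable {T : X →L[ℝ] Y} {B : Y →L[ℝ] X}

lemma pinv_BTB (h : IsPseudoinverse T B) (y : Y) : B (T (B y)) = B y := by
  conv_rhs => rw [← h.2.1]
  rfl

lemma pinv_TBT (h : IsPseudoinverse T B) (v : X) : T (B (T v)) = T v := by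
  conv_rhs => rw [← h.1]
  rfl

lemma pinv_inner_ker (h : IsPseudoinverse T B) {u : X} (hu : T u = 0) (y : Y) :
    ⟪B y, u⟫ = 0 := by
  have h4 := h.2.2.2
  have key : ⟪(B.comp T) (B y), u⟫ = ⟪B y, (B.comp T) u⟫ := by
    conv_lhs => rw [← h4]
    exact ContinuousLinearMap.adjoint_inner_left _ _ _
  have : (B.comp T) (B y) = B y := pinv_BTB h y
  rw [this] at key
  have : (B.comp T) u = 0 := by simp [ContinuousLinearMap.comp_apply, hu]
  rw [this, inner_zero_right] at key
  exact key

lemma pinv_min_norm (h : IsPseudoinverse T B) {y : Y} {w : X} (hw : T w = T (B y)) :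
    ‖B y‖ ≤ ‖w‖ := by
  have hker : T (w - B y) = 0 := by rw [map_sub, hw, sub_self]
  have hinner : ⟪B y, w - B y⟫ = 0 := pinv_inner_ker h hker y
  have hpyth : ‖w‖ ^ 2 = ‖B y‖ ^ 2 + ‖w - B y‖ ^ 2 := by
    have e : B y + (w - B y) = w := by abel
    calc ‖w‖ ^ 2 = ‖B y + (w - B y)‖ ^ 2 := by rw [e]
      _ = ‖B y‖ ^ 2 + 2 * ⟪B y, w - B y⟫ + ‖w - B y‖ ^ 2 := norm_add_sq_real _ _
      _ = _ := by rw [hinner]; ring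
  nlinarith [norm_nonneg (B y), norm_nonneg w, sq_nonneg ‖w - B y‖]

lemma pinv_TB_inner_range (h : IsPseudoinverse T B) (y : Y) (v : X) :
    ⟪y - T (B y), T v⟫ = 0 := by
  have h3 := h.2.2.1
  have key : ⟪(T.comp B) y, T v⟫ = ⟪y, (T.comp B) (T v)⟫ := by
    conv_lhs => rw [← h3]
    exact ContinuousLinearMap.adjoint_inner_left _ _ _
  have : (T.comp B) (T v) = T v := pinv_TBT h v
  rw [this] at key
  simp only [ContinuousLinearMap.comp_apply] at key
  rw [inner_sub_left, key, sub_self]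

lemma pinv_norm_TB_le (h : IsPseudoinverse T B) (y : Y) : ‖T (B y)‖ ≤ ‖y‖ := by
  have h0 : ⟪y - T (B y), T (B y)⟫ = 0 := pinv_TB_inner_range h y (B y)
  have key : ⟪T (B y), T (B y)⟫ = ⟪y, T (B y)⟫ := by
    have := h0; rw [inner_sub_left] at this; linarith
  have h2 : ‖T (B y)‖ ^ 2 ≤ ‖y‖ * ‖T (B y)‖ := by
    rw [← real_inner_self_eq_norm_sq, key]
    exact real_inner_le_norm _ _
  nlinarith [norm_nonneg (T (B y)), norm_nonneg y]

lemma pinv_least_squares (h : IsPseudoinverse T B) (y : Y) (w : X) :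
    ‖y - T (B y)‖ ≤ ‖y - T w‖ := by
  have h0 : ⟪y - T (B y), T (B y) - T w⟫ = 0 := by
    rw [inner_sub_right, pinv_TB_inner_range h y (B y), pinv_TB_inner_range h y w, sub_self]
  have hpyth : ‖y - T w‖ ^ 2 = ‖y - T (B y)‖ ^ 2 + ‖T (B y) - T w‖ ^ 2 := by
    have e : (y - T (B y)) + (T (B y) - T w) = y - T w := by abel
    calc ‖y - T w‖ ^ 2 = ‖(y - T (B y)) + (T (B y) - T w)‖ ^ 2 := by rw [e]
      _ = ‖y - T (B y)‖ ^ 2 + 2 * ⟪y - T (B y), T (B y) - T w⟫ + ‖T (B y) - T w‖ ^ 2 :=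
        norm_add_sq_real _ _
      _ = _ := by rw [h0]; ring
  nlinarith [norm_nonneg (y - T (B y)), norm_nonneg (y - T w), sq_nonneg ‖T (B y) - T w‖]

/-- Uniqueness of "projection-like" points. -/
lemma projlike_unique {R : Submodule ℝ Y} {v e e' : Y} (he : e ∈ R) (he' : e' ∈ R)
    (h1 : ∀ r ∈ R, ⟪v - e, r⟫ = 0) (h2 : ∀ r ∈ R, ⟪v - e', r⟫ = 0) : e = e' := by
  have hm : e - e' ∈ R := sub_mem he he'
  have k1 := h1 _ hm
  have k2 := h2 _ hm
  have : ⟪e - e', e - e'⟫ = 0 := by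
    have : ⟪(v - e') - (v - e), e - e'⟫ = 0 := by rw [inner_sub_left, k1, k2, sub_self]
    simpa using this
  have := inner_self_eq_zero.1 this
  rwa [sub_eq_zero] at this

end Penrose

section Combinatorial

lemma exists_bound_of_tail (f : ℕ → ℝ) :
    ∀ (N : ℕ) (C : ℝ), (∀ n, N ≤ n → f n ≤ C) → ∃ D : ℝ, ∀ n, f n ≤ D := by
  intro N
  induction N with
  | zero => exact fun C h => ⟨C, fun n => h n (Nat.zero_le n)⟩
  | succ k ih =>
    intro C h
    refine ih (max C (f k)) (fun n hn => ?_)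
    rcases eq_or_lt_of_le hn with h' | h'
    · rw [← h']; exact le_max_right _ _
    · exact (h n h').trans (le_max_left _ _)

lemma nat_mono_stab {d : ℕ → ℕ} (hd : Monotone d) {D : ℕ} (hD : ∀ n, d n ≤ D) :
    ∃ n0, ∀ n, n0 ≤ n → d n = d n0 := by
  have hbdd : BddAbove (Set.range d) := ⟨D, by rintro _ ⟨n, rfl⟩; exact hD n⟩
  obtain ⟨n0, hn0⟩ := Nat.sSup_mem (Set.range_nonempty d) hbdd
  refine ⟨n0, fun n hn => le_antisymm ?_ (hd hn)⟩
  rw [hn0]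
  exact le_csSup hbdd ⟨n, rfl⟩

lemma nat_anti_stab {d : ℕ → ℕ} (hd : Antitone d) :
    ∃ n0, ∀ n, n0 ≤ n → d n = d n0 := by
  obtain ⟨n0, hn0⟩ := Nat.sInf_mem (Set.range_nonempty d)
  refine ⟨n0, fun n hn => le_antisymm (hd hn) ?_⟩
  rw [hn0]
  exact Nat.sInf_le ⟨n, rfl⟩

end Combinatorial

section WeakLimit

set_option linter.unusedSectionVars false

variable {X : Type*} [NormedAddCommGroup X] [InnerProductSpace ℝ X]

local notation "⟪" x ", " y "⟫" => @inner ℝ _ _ x y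

lemma tendsto_inner_of_dense {f : ℕ × ℕ → X} {C : ℝ} (hC : ∀ p, ‖f p‖ ≤ C)
    {S : Set X} {z : X} (hz : z ∈ closure S)
    (h : ∀ w ∈ S, Tendsto (fun p => ⟪f p, w⟫) atTop (𝓝 0)) :
    Tendsto (fun p => ⟪f p, z⟫) atTop (𝓝 0) := by
  have hC0 : 0 ≤ C := (norm_nonneg _).trans (hC (0, 0))
  rw [Metric.tendsto_atTop]
  intro ε hε
  have hpos : 0 < ε / (2 * (C + 1)) := by positivity
  obtain ⟨w, hw, hwd⟩ := Metric.mem_closure_iff.1 hz _ hpos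
  obtain ⟨N, hN⟩ := (Metric.tendsto_atTop.1 (h w hw)) (ε / 2) (by positivity)
  refine ⟨N, fun p hp => ?_⟩
  have h1 := hN p hp
  rw [Real.dist_eq] at h1 ⊢
  have h2 : |⟪f p, z⟫ - 0| ≤ |⟪f p, w⟫ - 0| + |⟪f p, z - w⟫| := by
    have : ⟪f p, z⟫ = ⟪f p, w⟫ + ⟪f p, z - w⟫ := by rw [inner_sub_right]; ring
    rw [this]
    simpa using abs_add_le _ _
  have h3 : |⟪f p, z - w⟫| ≤ C * ‖z - w‖ :=
    (abs_real_inner_le_norm _ _).trans (by gcongr; exact hC p)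
  have h4 : ‖z - w‖ < ε / (2 * (C + 1)) := by rwa [← dist_eq_norm]
  have h5 : C * ‖z - w‖ < ε / 2 := by
    calc C * ‖z - w‖ ≤ C * (ε / (2 * (C + 1))) := by
          apply mul_le_mul_of_nonneg_left h4.le hC0
      _ < ε / 2 := by
          rw [mul_div_assoc', div_lt_div_iff₀ (by positivity) (by norm_num)]
          nlinarith
  calc |⟪f p, z⟫ - 0| ≤ |⟪f p, w⟫ - 0| + |⟪f p, z - w⟫| := h2
    _ < ε / 2 + ε / 2 := by
        apply add_lt_add h1 (h3.trans_lt h5)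
    _ = ε := by ring

end WeakLimit

section AmnFacts

set_option linter.unusedSectionVars false

variable {X Y : Type*} [NormedAddCommGroup X] [InnerProductSpace ℝ X] [CompleteSpace X]
  [NormedAddCommGroup Y] [InnerProductSpace ℝ Y] [CompleteSpace Y]

local notation "⟪" x ", " y "⟫" => @inner ℝ _ _ x y

variable (A : X →L[ℝ] Y) {K : Submodule ℝ X} {L : Submodule ℝ Y}
  [Submodule.HasOrthogonalProjection K] [Submodule.HasOrthogonalProjection L]

lemma Amn_apply (v : X) : Amn A K L v = proj L (A (proj K v)) := rfl

lemma Amn_apply_of_mem {v : X} (hv : v ∈ K) : Amn A K L v = proj L (A v) := by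
  rw [Amn_apply, proj_eq_self_s19 hv]

lemma Amn_eq_zero_of_mem_ker {v : X} (hv : v ∈ K) (hAv : A v = 0) : Amn A K L v = 0 := by
  rw [Amn_apply_of_mem A hv, hAv, map_zero]

lemma Amn_eq_zero_of_mem_orthogonal {v : X} (hv : v ∈ Kᗮ) : Amn A K L v = 0 := by
  rw [Amn_apply, proj_eq_zero_s19 hv, map_zero, map_zero]

lemma pinv_mem {B : Y →L[ℝ] X} (h : IsPseudoinverse (Amn A K L) B) (y : Y) : B y ∈ K := by
  rw [← Submodule.orthogonal_orthogonal K]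
  intro u hu
  rw [real_inner_comm]
  exact pinv_inner_ker h (Amn_eq_zero_of_mem_orthogonal A hu) y

end AmnFacts

section RowCol

set_option linter.unusedSectionVars false

variable {X Y : Type*} [NormedAddCommGroup X] [InnerProductSpace ℝ X] [CompleteSpace X]
  [NormedAddCommGroup Y] [InnerProductSpace ℝ Y] [CompleteSpace Y]

local notation "⟪" x ", " y "⟫" => @inner ℝ _ _ x y

lemma row_bound (A : X →L[ℝ] Y) (Xn : ℕ → Submodule ℝ X) (Ym : ℕ → Submodule ℝ Y)
    [∀ n, FiniteDimensional ℝ (Xn n)] [∀ m, FiniteDimensional ℝ (Ym m)]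
    (hX : Monotone Xn)
    (Adag : ℕ → ℕ → (Y →L[ℝ] X))
    (hdag : ∀ n m, IsPseudoinverse (Amn A (Xn n) (Ym m)) (Adag n m))
    (xd : X) (m : ℕ) :
    ∃ C : ℝ, ∀ n : ℕ, ‖Adag n m (A xd)‖ ≤ C := by
  classical
  set Q : Y →L[ℝ] Y := proj (Ym m) with hQ
  set R : ℕ → Submodule ℝ Y := fun n => Submodule.map (Q.comp A : X →ₗ[ℝ] Y) (Xn n) with hR
  have hRmono : Monotone R := fun a b hab => Submodule.map_mono (hX hab)
  have hRle : ∀ n, R n ≤ Ym m := by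
    rintro n y ⟨x, hx, rfl⟩
    exact proj_mem_s19 _
  haveI hfin : ∀ n, FiniteDimensional ℝ (R n) := fun n =>
    Submodule.finiteDimensional_of_le (hRle n)
  obtain ⟨n0, hn0⟩ := nat_mono_stab
    (d := fun n => Module.finrank ℝ (R n))
    (fun a b hab => Submodule.finrank_mono (hRmono hab))
    (D := Module.finrank ℝ (Ym m)) (fun n => Submodule.finrank_mono (hRle n))
  have hReq : ∀ n, n0 ≤ n → R n0 = R n := fun n hn =>
    Submodule.eq_of_le_of_finrank_le (hRmono hn) (le_of_eq (hn0 n hn))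
  -- notation
  set T : ℕ → X →L[ℝ] Y := fun n => Amn A (Xn n) (Ym m) with hT
  set x : ℕ → X := fun n => Adag n m (A xd) with hx
  -- membership of T n w in R n
  have hTmem : ∀ n (w : X), T n w ∈ R n := by
    intro n w
    exact ⟨proj (Xn n) w, proj_mem_s19 _, rfl⟩
  -- every element of R n is of the form T n u
  have hRform : ∀ n (r : Y), r ∈ R n → ∃ u : X, T n u = r := by
    rintro n r ⟨u, hu, rfl⟩
    exact ⟨u, by rw [hT]; show Amn A (Xn n) (Ym m) u = _; rw [Amn_apply_of_mem A hu]; rfl⟩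
  have horth : ∀ n (r : Y), r ∈ R n → ⟪A xd - T n (x n), r⟫ = 0 := by
    intro n r hr
    obtain ⟨u, rfl⟩ := hRform n r hr
    exact pinv_TB_inner_range (hdag n m) (A xd) u
  have key : ∀ n, n0 ≤ n → T n (x n) = T n0 (x n0) := by
    intro n hn
    refine projlike_unique (R := R n0) (v := A xd) ?_ ?_ ?_ ?_
    · rw [hReq n hn]; exact hTmem n (x n)
    · exact hTmem n0 (x n0)
    · intro r hr; exact horth n r ((hReq n hn) ▸ hr)
    · intro r hr; exact horth n0 r hr
  have hmem : ∀ n, x n ∈ Xn n := fun n => pinv_mem A (hdag n m) (A xd)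
  have hminle : ∀ n, n0 ≤ n → ‖x n‖ ≤ ‖x n0‖ := by
    intro n hn
    refine pinv_min_norm (hdag n m) (w := x n0) ?_
    have e1 : T n (x n0) = Q (A (x n0)) := by
      show Amn A (Xn n) (Ym m) (x n0) = _
      rw [Amn_apply_of_mem A (hX hn (hmem n0))]
    have e2 : T n0 (x n0) = Q (A (x n0)) := by
      show Amn A (Xn n0) (Ym m) (x n0) = _
      rw [Amn_apply_of_mem A (hmem n0)]
    show T n (x n0) = T n (Adag n m (A xd))
    rw [e1, ← e2, ← key n hn]
  exact exists_bound_of_tail (fun n => ‖x n‖) n0 ‖x n0‖ hminle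

end RowCol

section ColBound

set_option linter.unusedSectionVars false
set_option maxHeartbeats 1000000

variable {X Y : Type*} [NormedAddCommGroup X] [InnerProductSpace ℝ X] [CompleteSpace X]
  [NormedAddCommGroup Y] [InnerProductSpace ℝ Y] [CompleteSpace Y]

local notation "⟪" x ", " y "⟫" => @inner ℝ _ _ x y

lemma col_bound (A : X →L[ℝ] Y) (Xn : ℕ → Submodule ℝ X) (Ym : ℕ → Submodule ℝ Y)
    [∀ n, FiniteDimensional ℝ (Xn n)] [∀ m, FiniteDimensional ℝ (Ym m)]
    (hY : Monotone Ym) (hdY : Dense (↑(⨆ m, Ym m) : Set Y))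
    (Adag : ℕ → ℕ → (Y →L[ℝ] X))
    (hdag : ∀ n m, IsPseudoinverse (Amn A (Xn n) (Ym m)) (Adag n m))
    (xd : X) (n : ℕ) :
    ∃ C : ℝ, ∀ m : ℕ, ‖Adag n m (A xd)‖ ≤ C := by
  classical
  -- the stabilizing kernels
  set Kf : ℕ → Submodule ℝ X := fun m => Xn n ⊓ LinearMap.ker ((proj (Ym m)).comp A : X →ₗ[ℝ] Y) with hKf
  have hKmem : ∀ m (v : X), v ∈ Kf m ↔ v ∈ Xn n ∧ proj (Ym m) (A v) = 0 := by
    intro m v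
    simp [hKf, Submodule.mem_inf, LinearMap.mem_ker]
  have hanti : Antitone Kf := by
    intro a b hab v hv
    rw [hKmem] at hv ⊢
    refine ⟨hv.1, ?_⟩
    rw [← proj_proj_of_le (hY hab) (A v), hv.2, map_zero]
  haveI hKfin : ∀ m, FiniteDimensional ℝ (Kf m) := fun m =>
    Submodule.finiteDimensional_of_le inf_le_left
  obtain ⟨m1, hm1⟩ := nat_anti_stab (d := fun m => Module.finrank ℝ (Kf m))
    (fun a b hab => Submodule.finrank_mono (hanti hab))
  have hKeq : ∀ m, m1 ≤ m → Kf m = Kf m1 := fun m hm =>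
    Submodule.eq_of_le_of_finrank_le (hanti hm) (le_of_eq (hm1 m hm).symm)
  -- the space W on which A is injective
  set W : Submodule ℝ X := Xn n ⊓ (Kf m1)ᗮ with hW
  haveI : FiniteDimensional ℝ W := Submodule.finiteDimensional_of_le inf_le_left
  -- antilipschitz constant
  have hker : LinearMap.ker (A.comp W.subtypeL).toLinearMap = ⊥ := by
    rw [LinearMap.ker_eq_bot]
    intro w w' hww
    have hw : A ((w : X)) = A ((w' : X)) := hww
    have hd : A ((w : X) - (w' : X)) = 0 := by rw [map_sub, hw, sub_self]
    have hXmem : (w : X) - (w' : X) ∈ Xn n := sub_mem w.2.1 w'.2.1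
    have hKm : (w : X) - (w' : X) ∈ Kf m1 := by
      rw [hKmem]
      exact ⟨hXmem, by rw [hd, map_zero]⟩
    have horth : (w : X) - (w' : X) ∈ (Kf m1)ᗮ := sub_mem w.2.2 w'.2.2
    have : (w : X) - (w' : X) = 0 := by
      have := horth _ hKm
      rwa [real_inner_self_eq_norm_sq, pow_eq_zero_iff (by norm_num), norm_eq_zero] at this
    ext
    exact sub_eq_zero.1 this
  obtain ⟨c, hc0, hcA⟩ := LinearMap.exists_antilipschitzWith _ hker
  set cc : ℝ := (c : ℝ) with hcc
  have hcc0 : 0 < cc := hc0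
  have hlow : ∀ w : W, ‖(w : X)‖ ≤ cc * ‖A (w : X)‖ := by
    intro w
    have := hcA.le_mul_dist w 0
    simpa [dist_eq_norm] using this
  -- orthonormal basis of W and the uniform estimate
  set b := stdOrthonormalBasis ℝ W with hb
  set g : ℕ → ℝ := fun m => ∑ i, ‖A ((b i : X)) - proj (Ym m) (A ((b i : X)))‖ with hg
  have hgto : Tendsto g atTop (𝓝 0) := by
    have : ∀ i : Fin (Module.finrank ℝ W),
        Tendsto (fun m => ‖A ((b i : X)) - proj (Ym m) (A ((b i : X)))‖) atTop (𝓝 0) := by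
      intro i
      have h1 := (tendsto_const_nhds (x := A ((b i : X)))).sub
        (tendsto_proj_iSup hY hdY (A ((b i : X))))
      have := h1.norm
      simpa using this
    have hsum := tendsto_finset_sum (Finset.univ) (fun i _ => this i)
    simpa using hsum
  have hEst : ∀ w : W, ∀ m, ‖A ((w : X)) - proj (Ym m) (A ((w : X)))‖ ≤ g m * ‖(w : X)‖ := by
    intro w m
    set F : X →L[ℝ] Y := A - (proj (Ym m)).comp A with hF
    have hFapply : ∀ v : X, F v = A v - proj (Ym m) (A v) := fun v => rfl
    have hwsum : (w : X) = ∑ i, b.repr w i • ((b i : X)) := by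
      conv_lhs => rw [← b.sum_repr w]
      simp
    have hFsum : F (w : X) = ∑ i, b.repr w i • F ((b i : X)) := by
      rw [hwsum, map_sum]
      simp
    have hcoef : ∀ i, |b.repr w i| ≤ ‖(w : X)‖ := by
      intro i
      rw [b.repr_apply_apply]
      have : ⟪b i, w⟫ = ⟪((b i : W) : X), (w : X)⟫ := rfl
      rw [this]
      have := abs_real_inner_le_norm ((b i : W) : X) (w : X)
      have hni : ‖((b i : W) : X)‖ = 1 := by
        have := b.orthonormal.1 i
        exact this
      rw [hni, one_mul] at this
      exact this
    calc ‖A ((w : X)) - proj (Ym m) (A ((w : X)))‖ = ‖F (w : X)‖ := by rw [hFapply]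
      _ = ‖∑ i, b.repr w i • F ((b i : X))‖ := by rw [hFsum]
      _ ≤ ∑ i, ‖b.repr w i • F ((b i : X))‖ := norm_sum_le _ _
      _ = ∑ i, |b.repr w i| * ‖F ((b i : X))‖ := by
          simp [norm_smul, Real.norm_eq_abs]
      _ ≤ ∑ i, ‖(w : X)‖ * ‖F ((b i : X))‖ := by
          refine Finset.sum_le_sum (fun i _ => ?_)
          exact mul_le_mul_of_nonneg_right (hcoef i) (norm_nonneg _)
      _ = g m * ‖(w : X)‖ := by
          rw [← Finset.mul_sum, mul_comm]
          rfl
  -- eventual smallness of g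
  have hev : ∀ᶠ m in atTop, g m < 1 / (2 * cc) := hgto.eventually
    (gt_mem_nhds (by positivity))
  obtain ⟨m2', hm2'⟩ := eventually_atTop.1 hev
  set m2 := max m1 m2' with hm2
  -- the tail bound
  have htail : ∀ m, m2 ≤ m → ‖Adag n m (A xd)‖ ≤ 2 * cc * ‖A xd‖ := by
    intro m hm
    set x : X := Adag n m (A xd) with hxdef
    have hxXn : x ∈ Xn n := pinv_mem A (hdag n m) (A xd)
    have hxorth : x ∈ (Kf m1)ᗮ := by
      intro u hu
      have hum : u ∈ Kf m := by
        rw [hKeq m ((le_max_left _ _).trans hm)]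
        exact hu
      rw [hKmem] at hum
      have hTu : Amn A (Xn n) (Ym m) u = 0 := by
        rw [Amn_apply_of_mem A hum.1, hum.2]
      rw [real_inner_comm]
      exact pinv_inner_ker (hdag n m) hTu (A xd)
    have hxW : x ∈ W := ⟨hxXn, hxorth⟩
    have hTx : Amn A (Xn n) (Ym m) x = proj (Ym m) (A x) := Amn_apply_of_mem A hxXn
    have hTxle : ‖proj (Ym m) (A x)‖ ≤ ‖A xd‖ := by
      have := pinv_norm_TB_le (hdag n m) (A xd)
      rwa [show Amn A (Xn n) (Ym m) (Adag n m (A xd)) = proj (Ym m) (A x) from hTx] at this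
    have h1 : ‖x‖ ≤ cc * ‖A x‖ := hlow ⟨x, hxW⟩
    have h2 : ‖A x‖ ≤ ‖A x - proj (Ym m) (A x)‖ + ‖proj (Ym m) (A x)‖ := by
      have : A x = (A x - proj (Ym m) (A x)) + proj (Ym m) (A x) := by abel
      rw [this]
      exact (norm_add_le _ _).trans (by rw [← this])
    have h3 : ‖A x - proj (Ym m) (A x)‖ ≤ g m * ‖x‖ := hEst ⟨x, hxW⟩ m
    have h4 : g m < 1 / (2 * cc) := hm2' m ((le_max_right _ _).trans hm)
    have h5 : g m * ‖x‖ ≤ (1 / (2 * cc)) * ‖x‖ :=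
      mul_le_mul_of_nonneg_right h4.le (norm_nonneg _)
    have key : ‖x‖ ≤ cc * ((1 / (2 * cc)) * ‖x‖ + ‖A xd‖) := by
      calc ‖x‖ ≤ cc * ‖A x‖ := h1
        _ ≤ cc * ((1 / (2 * cc)) * ‖x‖ + ‖A xd‖) := by
            apply mul_le_mul_of_nonneg_left _ hcc0.le
            calc ‖A x‖ ≤ ‖A x - proj (Ym m) (A x)‖ + ‖proj (Ym m) (A x)‖ := h2
              _ ≤ g m * ‖x‖ + ‖A xd‖ := add_le_add h3 hTxle
              _ ≤ (1 / (2 * cc)) * ‖x‖ + ‖A xd‖ := add_le_add_left h5 _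
    have hccne : cc ≠ 0 := ne_of_gt hcc0
    have key2 : ‖x‖ ≤ (1 / 2) * ‖x‖ + cc * ‖A xd‖ := by
      have : cc * ((1 / (2 * cc)) * ‖x‖) = (1 / 2) * ‖x‖ := by
        field_simp
      calc ‖x‖ ≤ cc * ((1 / (2 * cc)) * ‖x‖ + ‖A xd‖) := key
        _ = cc * ((1 / (2 * cc)) * ‖x‖) + cc * ‖A xd‖ := by ring
        _ = (1 / 2) * ‖x‖ + cc * ‖A xd‖ := by rw [this]
    linarith
  exact exists_bound_of_tail (fun m => ‖Adag n m (A xd)‖) m2 (2 * cc * ‖A xd‖) htail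

end ColBound

section Main

set_option linter.unusedSectionVars false
set_option maxHeartbeats 2000000

variable {X Y : Type*} [NormedAddCommGroup X] [InnerProductSpace ℝ X] [CompleteSpace X]
  [NormedAddCommGroup Y] [InnerProductSpace ℝ Y] [CompleteSpace Y]

local notation "⟪" x ", " y "⟫" => @inner ℝ _ _ x y

lemma inner_sub_proj {L : Submodule ℝ Y} [Submodule.HasOrthogonalProjection L] (v y : Y) :
    ⟪v - proj L v, y⟫ = ⟪v, y - proj L y⟫ := by
  rw [inner_sub_left, inner_sub_right, inner_proj_left_right]

lemma T_xp_close (A : X →L[ℝ] Y) (Xn : ℕ → Submodule ℝ X) (Ym : ℕ → Submodule ℝ Y)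
    [∀ n, FiniteDimensional ℝ (Xn n)] [∀ m, FiniteDimensional ℝ (Ym m)]
    (Adag : ℕ → ℕ → (Y →L[ℝ] X))
    (hdag : ∀ n m, IsPseudoinverse (Amn A (Xn n) (Ym m)) (Adag n m))
    (xd : X) (p : ℕ × ℕ) :
    ‖Amn A (Xn p.1) (Ym p.2) (Adag p.1 p.2 (A xd)) - A xd‖ ≤
      ‖A‖ * ‖xd - proj (Xn p.1) xd‖ + ‖A xd - proj (Ym p.2) (A xd)‖ := by
  rw [norm_sub_rev]
  have h1 : ‖A xd - Amn A (Xn p.1) (Ym p.2) (Adag p.1 p.2 (A xd))‖ ≤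
      ‖A xd - Amn A (Xn p.1) (Ym p.2) xd‖ := pinv_least_squares (hdag p.1 p.2) (A xd) xd
  refine h1.trans ?_
  have e : Amn A (Xn p.1) (Ym p.2) xd = proj (Ym p.2) (A (proj (Xn p.1) xd)) := rfl
  rw [e]
  set Q := proj (Ym p.2)
  set v := A xd
  set u := A (proj (Xn p.1) xd)
  have tri : ‖v - Q u‖ ≤ ‖v - Q v‖ + ‖Q v - Q u‖ := by
    have : v - Q u = (v - Q v) + (Q v - Q u) := by abel
    rw [this]; exact norm_add_le _ _
  refine tri.trans ?_
  have h2 : ‖Q v - Q u‖ ≤ ‖A‖ * ‖xd - proj (Xn p.1) xd‖ := by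
    rw [← map_sub]
    refine (norm_proj_le _).trans ?_
    have : v - u = A (xd - proj (Xn p.1) xd) := by rw [map_sub]
    rw [this]
    exact A.le_opNorm _
  linarith

end Main

local notation "⟪" x ", " y "⟫" => @inner ℝ _ _ x y

set_option maxHeartbeats 2000000 in
/-- under the space condition `closure (⋃ₙ (N(A) ⊓ X_n)) = N(A)`,
`x_{n,m} ⇀ x†` weakly iff `sup_{n,m} ‖x_{n,m}‖ < ∞`. -/
theorem stmt_19 {X Y : Type*} [NormedAddCommGroup X] [InnerProductSpace ℝ X] [CompleteSpace X]
    [NormedAddCommGroup Y] [InnerProductSpace ℝ Y] [CompleteSpace Y]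
    (A : X →L[ℝ] Y) (Xn : ℕ → Submodule ℝ X) (Ym : ℕ → Submodule ℝ Y)
    [∀ n, FiniteDimensional ℝ (Xn n)] [∀ m, FiniteDimensional ℝ (Ym m)]
    (hX : Monotone Xn) (hY : Monotone Ym)
    (hdX : Dense (↑(⨆ n, Xn n) : Set X)) (hdY : Dense (↑(⨆ m, Ym m) : Set Y))
    (Adag : ℕ → ℕ → (Y →L[ℝ] X))
    (hdag : ∀ n m, IsPseudoinverse (Amn A (Xn n) (Ym m)) (Adag n m))
    (hspace : closure (↑(⨆ n, LinearMap.ker (A : X →ₗ[ℝ] Y) ⊓ Xn n) : Set X) = (LinearMap.ker (A : X →ₗ[ℝ] Y) : Set X))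
    (xd : X) (hxd : xd ∈ (LinearMap.ker (A : X →ₗ[ℝ] Y))ᗮ) :
    (∀ z : X, Tendsto (fun p : ℕ × ℕ => @inner ℝ X _ (Adag p.1 p.2 (A xd)) z)
        atTop (nhds (@inner ℝ X _ xd z))) ↔
    (∃ C : ℝ, ∀ p : ℕ × ℕ, ‖Adag p.1 p.2 (A xd)‖ ≤ C) := by
  classical
  set x : ℕ × ℕ → X := fun p => Adag p.1 p.2 (A xd) with hxdef
  constructor
  · -- weak convergence → boundedness
    intro hweak
    -- bounds on initial rows and columns
    have hrowb : ∀ b : ℕ, ∃ C : ℝ, ∀ p : ℕ × ℕ, p.2 < b → ‖x p‖ ≤ C := by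
      intro b
      induction b with
      | zero => exact ⟨0, fun p hp => absurd hp (Nat.not_lt_zero _)⟩
      | succ k ih =>
        obtain ⟨C1, hC1⟩ := ih
        obtain ⟨C2, hC2⟩ := row_bound A Xn Ym hX Adag hdag xd k
        refine ⟨max C1 C2, fun p hp => ?_⟩
        rcases Nat.lt_succ_iff_lt_or_eq.1 hp with h | h
        · exact (hC1 p h).trans (le_max_left _ _)
        · have h2 := hC2 p.1
          have e : x p = Adag p.1 k (A xd) := by rw [hxdef]; simp [h]
          rw [e]
          exact h2.trans (le_max_right _ _)
    have hcolb : ∀ a : ℕ, ∃ C : ℝ, ∀ p : ℕ × ℕ, p.1 < a → ‖x p‖ ≤ C := by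
      intro a
      induction a with
      | zero => exact ⟨0, fun p hp => absurd hp (Nat.not_lt_zero _)⟩
      | succ k ih =>
        obtain ⟨C1, hC1⟩ := ih
        obtain ⟨C2, hC2⟩ := col_bound A Xn Ym hY hdY Adag hdag xd k
        refine ⟨max C1 C2, fun p hp => ?_⟩
        rcases Nat.lt_succ_iff_lt_or_eq.1 hp with h | h
        · exact (hC1 p h).trans (le_max_left _ _)
        · have h2 := hC2 p.2
          have e : x p = Adag k p.2 (A xd) := by rw [hxdef]; simp [h]
          rw [e]
          exact h2.trans (le_max_right _ _)
    -- pointwise boundedness of the inner products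
    have hptwise : ∀ z : X, ∃ M : ℝ, ∀ p : ℕ × ℕ, ‖(innerSL ℝ (x p)) z‖ ≤ M := by
      intro z
      set L : ℝ := @inner ℝ X _ xd z with hL
      have hball := (hweak z).eventually (Metric.ball_mem_nhds L one_pos)
      obtain ⟨a, ha⟩ := eventually_atTop.1 hball
      obtain ⟨C1, hC1⟩ := hrowb a.2
      obtain ⟨C2, hC2⟩ := hcolb a.1
      refine ⟨max (|L| + 1) (max C1 C2 * ‖z‖), fun p => ?_⟩
      have hval : (innerSL ℝ (x p)) z = ⟪x p, z⟫ := rfl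
      by_cases hp : a ≤ p
      · have := ha p hp
        simp only [Set.mem_setOf_eq, Metric.mem_ball, Real.dist_eq] at this
        have habs : |⟪x p, z⟫| ≤ |L| + 1 := by
          have h2 := abs_sub_abs_le_abs_sub (⟪x p, z⟫) L
          linarith
        rw [hval, Real.norm_eq_abs]
        exact habs.trans (le_max_left _ _)
      · have hsplit : p.1 < a.1 ∨ p.2 < a.2 := by
          rw [Prod.le_def, not_and_or] at hp
          rcases hp with h | h
          · exact Or.inl (Nat.lt_of_not_le h)
          · exact Or.inr (Nat.lt_of_not_le h)
        have hxb : ‖x p‖ ≤ max C1 C2 := by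
          rcases hsplit with h | h
          · exact (hC2 p h).trans (le_max_right _ _)
          · exact (hC1 p h).trans (le_max_left _ _)
        rw [hval, Real.norm_eq_abs]
        calc |⟪x p, z⟫| ≤ ‖x p‖ * ‖z‖ := abs_real_inner_le_norm _ _
          _ ≤ max C1 C2 * ‖z‖ := mul_le_mul_of_nonneg_right hxb (norm_nonneg _)
          _ ≤ _ := le_max_right _ _
    obtain ⟨C', hC'⟩ := banach_steinhaus (g := fun p : ℕ × ℕ => innerSL ℝ (x p))
      (fun z => hptwise z)
    refine ⟨C', fun p => ?_⟩
    have : ‖innerSL ℝ (x p)‖ = ‖x p‖ := innerSL_apply_norm (𝕜 := ℝ) (x p)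
    rw [show Adag p.1 p.2 (A xd) = x p from rfl, ← this]
    exact hC' p
  · -- boundedness → weak convergence
    rintro ⟨C, hC⟩ z
    have hC0 : 0 ≤ C := (norm_nonneg _).trans (hC (0, 0))
    -- the difference function
    set f : ℕ × ℕ → X := fun p => x p - xd with hfdef
    have hCf : ∀ p, ‖f p‖ ≤ C + ‖xd‖ := fun p =>
      (norm_sub_le _ _).trans (add_le_add_left (hC p) _)
    -- membership lemmas
    have hxmem : ∀ p : ℕ × ℕ, x p ∈ Xn p.1 := fun p => pinv_mem A (hdag p.1 p.2) (A xd)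
    -- reduce to showing Tendsto ⟪f p, z⟫ → 0
    suffices hsuff : Tendsto (fun p : ℕ × ℕ => ⟪f p, z⟫) atTop (𝓝 0) by
      have he : (fun p : ℕ × ℕ => @inner ℝ X _ (Adag p.1 p.2 (A xd)) z)
          = fun p => ⟪f p, z⟫ + ⟪xd, z⟫ := by
        funext p
        rw [hfdef]
        simp only [inner_sub_left]
        ring
      rw [he]
      have := hsuff.add (tendsto_const_nhds (x := ⟪xd, z⟫))
      simpa using this
    -- decompose z
    haveI : Submodule.HasOrthogonalProjection (LinearMap.ker (A : X →ₗ[ℝ] Y)) := by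
      infer_instance
    obtain ⟨z1, hz1, z2, hz2, hzeq⟩ :=
      Submodule.exists_add_mem_mem_orthogonal (K := LinearMap.ker (A : X →ₗ[ℝ] Y)) z
    have hsplit : (fun p : ℕ × ℕ => ⟪f p, z⟫) = fun p => ⟪f p, z1⟫ + ⟪f p, z2⟫ := by
      funext p
      rw [hzeq, inner_add_right]
    rw [hsplit]
    have goal1 : Tendsto (fun p : ℕ × ℕ => ⟪f p, z1⟫) atTop (𝓝 0) := by
      refine tendsto_inner_of_dense hCf (S := (↑(⨆ n, LinearMap.ker (A : X →ₗ[ℝ] Y) ⊓ Xn n) : Set X)) ?_ ?_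
      · rw [hspace]; exact hz1
      · intro w hw
        have hmono : Monotone (fun n => LinearMap.ker (A : X →ₗ[ℝ] Y) ⊓ Xn n) :=
          fun a b hab => inf_le_inf le_rfl (hX hab)
        obtain ⟨k, hk⟩ := (Submodule.mem_iSup_of_directed _ hmono.directed_le).1 hw
        have hwk : w ∈ LinearMap.ker (A : X →ₗ[ℝ] Y) := hk.1
        have hwX : w ∈ Xn k := hk.2
        have hev : (fun p : ℕ × ℕ => ⟪f p, w⟫) =ᶠ[atTop] (fun _ => (0 : ℝ)) := by
          show ∀ᶠ p : ℕ × ℕ in atTop, ⟪f p, w⟫ = (0 : ℝ)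
          rw [eventually_atTop]
          refine ⟨(k, 0), fun p hp => ?_⟩
          have hpk : k ≤ p.1 := hp.1
          have hxw : ⟪x p, w⟫ = 0 := by
            refine pinv_inner_ker (hdag p.1 p.2) ?_ (A xd)
            exact Amn_eq_zero_of_mem_ker A (hX hpk hwX) (LinearMap.mem_ker.1 hwk)
          have hxdw : ⟪xd, w⟫ = 0 := by
            rw [real_inner_comm]
            exact hxd w hwk
          rw [hfdef]
          simp only [inner_sub_left]
          rw [hxw, hxdw, sub_zero]
        exact Tendsto.congr' hev.symm tendsto_const_nhds
    have goal2 : Tendsto (fun p : ℕ × ℕ => ⟪f p, z2⟫) atTop (𝓝 0) := by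
      -- z2 lies in the closure of the range of the adjoint
      have hker_eq : (LinearMap.ker (A : X →ₗ[ℝ] Y) : Submodule ℝ X) =
          (LinearMap.range (ContinuousLinearMap.adjoint A : Y →ₗ[ℝ] X))ᗮ := by
        ext v
        constructor
        · intro hv u hu
          obtain ⟨y, rfl⟩ := hu
          rw [ContinuousLinearMap.coe_coe, ContinuousLinearMap.adjoint_inner_left, show A v = 0 from LinearMap.mem_ker.1 hv, inner_zero_right]
        · intro hv
          have h0 := hv _ ⟨A v, rfl⟩
          rw [ContinuousLinearMap.coe_coe, ContinuousLinearMap.adjoint_inner_left] at h0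
          exact LinearMap.mem_ker.2 (inner_self_eq_zero.1 h0)
      have hz2' : z2 ∈ closure ((LinearMap.range (ContinuousLinearMap.adjoint A : Y →ₗ[ℝ] X) : Submodule ℝ X)
          : Set X) := by
        rw [← Submodule.topologicalClosure_coe, ← Submodule.orthogonal_orthogonal_eq_closure]
        rw [hker_eq] at hz2
        exact hz2
      refine tendsto_inner_of_dense hCf hz2' ?_
      rintro w ⟨y, rfl⟩
      -- the limit limits
      have hfst : Tendsto (Prod.fst : ℕ × ℕ → ℕ) atTop atTop := by
        rw [← prod_atTop_atTop_eq]; exact tendsto_fst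
      have hsnd : Tendsto (Prod.snd : ℕ × ℕ → ℕ) atTop atTop := by
        rw [← prod_atTop_atTop_eq]; exact tendsto_snd
      have tendY : ∀ v : Y, Tendsto (fun m => ‖v - proj (Ym m) v‖) atTop (𝓝 0) := by
        intro v
        have h1 := (tendsto_const_nhds (x := v)).sub (tendsto_proj_iSup hY hdY v)
        have := h1.norm
        simpa using this
      have tendX : Tendsto (fun n => ‖xd - proj (Xn n) xd‖) atTop (𝓝 0) := by
        have h1 := (tendsto_const_nhds (x := xd)).sub (tendsto_proj_iSup hX hdX xd)
        have := h1.norm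
        simpa using this
      -- the majorant
      set h : ℕ × ℕ → ℝ := fun p => ‖A‖ * (C + ‖xd‖) * ‖y - proj (Ym p.2) y‖ +
        (‖A‖ * ‖xd - proj (Xn p.1) xd‖ + ‖A xd - proj (Ym p.2) (A xd)‖) * ‖y‖ with hhdef
      have hmaj : ∀ p : ℕ × ℕ, ‖⟪f p, ContinuousLinearMap.adjoint A y⟫‖ ≤ h p := by
        intro p
        have e1 : ⟪f p, ContinuousLinearMap.adjoint A y⟫ = ⟪A (f p), y⟫ := by
          calc ⟪f p, ContinuousLinearMap.adjoint A y⟫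
              = ⟪ContinuousLinearMap.adjoint A y, f p⟫ := real_inner_comm _ _
            _ = ⟪y, A (f p)⟫ := ContinuousLinearMap.adjoint_inner_left A (f p) y
            _ = ⟪A (f p), y⟫ := real_inner_comm _ _
        set T : X →L[ℝ] Y := Amn A (Xn p.1) (Ym p.2) with hT
        have e2 : A (f p) = (A (x p) - T (x p)) + (T (x p) - A xd) := by
          rw [hfdef]
          simp only [map_sub]
          abel
        have eT : T (x p) = proj (Ym p.2) (A (x p)) := Amn_apply_of_mem A (hxmem p)
        have term1 : |⟪A (x p) - T (x p), y⟫| ≤ ‖A‖ * (C + ‖xd‖) * ‖y - proj (Ym p.2) y‖ := by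
          rw [eT, inner_sub_proj]
          refine (abs_real_inner_le_norm _ _).trans ?_
          have hAx : ‖A (x p)‖ ≤ ‖A‖ * (C + ‖xd‖) := by
            refine (A.le_opNorm _).trans ?_
            have : ‖x p‖ ≤ C + ‖xd‖ := (hC p).trans (by linarith [norm_nonneg xd])
            exact mul_le_mul_of_nonneg_left this (norm_nonneg _)
          exact mul_le_mul_of_nonneg_right hAx (norm_nonneg _)
        have term2 : |⟪T (x p) - A xd, y⟫| ≤
            (‖A‖ * ‖xd - proj (Xn p.1) xd‖ + ‖A xd - proj (Ym p.2) (A xd)‖) * ‖y‖ := by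
          refine (abs_real_inner_le_norm _ _).trans ?_
          refine mul_le_mul_of_nonneg_right ?_ (norm_nonneg _)
          exact T_xp_close A Xn Ym Adag hdag xd p
        rw [Real.norm_eq_abs, e1, e2, inner_add_left]
        calc |⟪A (x p) - T (x p), y⟫ + ⟪T (x p) - A xd, y⟫|
            ≤ |⟪A (x p) - T (x p), y⟫| + |⟪T (x p) - A xd, y⟫| := abs_add_le _ _
          _ ≤ h p := by rw [hhdef]; exact add_le_add term1 term2
      have hto : Tendsto h atTop (𝓝 0) := by
        rw [hhdef]
        have t1 : Tendsto (fun p : ℕ × ℕ => ‖A‖ * (C + ‖xd‖) * ‖y - proj (Ym p.2) y‖)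
            atTop (𝓝 0) := by
          have := ((tendY y).comp hsnd).const_mul (‖A‖ * (C + ‖xd‖))
          simpa using this
        have t2 : Tendsto (fun p : ℕ × ℕ =>
            (‖A‖ * ‖xd - proj (Xn p.1) xd‖ + ‖A xd - proj (Ym p.2) (A xd)‖) * ‖y‖)
            atTop (𝓝 0) := by
          have ha := (tendX.comp hfst).const_mul ‖A‖
          have hb := (tendY (A xd)).comp hsnd
          have := (ha.add hb).mul_const ‖y‖
          simpa using this
        have := t1.add t2
        simpa using this
      exact squeeze_zero_norm hmaj hto
    have := goal1.add goal2
    simpa using this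
end
end
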